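/- arXiv:2405.14741 — 8 statements merged into one kernel-verified Lean document; each statement's English description precedes it below -/
import Mathlib

section
/- Let z_1,...,z_n be i.i.d. random elements of a measurable space Z, let k ≤ n, and let κ : Z^k → ℝ be a (not necessarily symmetric) kernel with E[|κ(z_1,...,z_k)|] < ∞. Let U(z_1,...,z_n) = (1/(n(n−1)⋯(n−k+1))) Σ κ(z_{i_1},...,z_{i_k}), the sum ranging over all ordered k-tuples of distinct indices from {1,...,n}, and let κ̄(z_1,...,z_n) = (1/⌊n/k⌋) Σ_{i=1}^{⌊n/k⌋} κ(z_{k(i−1)+1},...,z_{ki}) be the block average over the first ⌊n/k⌋·k data points. Then for every t ∈ ℝ, E[exp(t·U)] ≤ E[exp(t·κ̄)]. -/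
set_option autoImplicit false

open MeasureTheory ProbabilityTheory Real
open scoped ENNReal

/-!
Every ordered `k`-tuple of distinct indices is the image of each block of the sample under the
same number of permutations of `Fin n`, so the U-statistic is the average over all permutations
`σ` of the block average of the relabelled sample `x ∘ σ`. Jensen's inequality for `exp` then
bounds `exp (t U)` by the average of `exp (t κ̄ (x ∘ σ))`, and since the law of an i.i.d. sample is
invariant under relabelling, each of these terms has the same expectation as `exp (t κ̄)`.
-/

open scoped BigOperators

theorem ConvexOn.map_expect_le {ι : Type*} {s : Set ℝ} {f : ℝ → ℝ} (hf : ConvexOn ℝ s f)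
    {t : Finset ι} (ht : t.Nonempty) {p : ι → ℝ} (hp : ∀ i ∈ t, p i ∈ s) :
    f (𝔼 i ∈ t, p i) ≤ 𝔼 i ∈ t, f (p i) := by
  have hw : ∑ _i ∈ t, (t.card : ℝ)⁻¹ = 1 := by
    rw [Finset.sum_const, nsmul_eq_mul, mul_inv_cancel₀ (by exact_mod_cast ht.card_ne_zero)]
  simpa only [Finset.expect_eq_sum_div_card, div_eq_inv_mul, Finset.mul_sum, smul_eq_mul]
    using hf.map_sum_le (fun _ _ => by positivity) hw hp

theorem MulAction.expect_smul_eq_expect {G X M : Type*} [Group G] [Fintype G] [MulAction G X]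
    [Fintype X] [IsPretransitive G X] [AddCommMonoid M] [Module ℚ≥0 M] (f : X → M) (x : X) :
    𝔼 g : G, f (g • x) = 𝔼 y : X, f y := by
  have h_basepoint : ∀ y : X, 𝔼 g : G, f (g • y) = 𝔼 g : G, f (g • x) := by
    intro y
    obtain ⟨h, rfl⟩ := exists_smul_eq G x y
    exact Fintype.expect_equiv (Equiv.mulRight h) _ _ fun g => by simp [mul_smul]
  have : Nonempty X := ⟨x⟩
  calc 𝔼 g : G, f (g • x) = 𝔼 _y : X, 𝔼 g : G, f (g • x) := (Fintype.expect_const _).symm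
    _ = 𝔼 y : X, 𝔼 g : G, f (g • y) := Finset.expect_congr rfl fun y _ => (h_basepoint y).symm
    _ = 𝔼 g : G, 𝔼 y : X, f (g • y) := Finset.expect_comm _ _ _
    _ = 𝔼 _g : G, 𝔼 y : X, f y := Finset.expect_congr rfl fun g _ =>
      Fintype.expect_bijective _ (MulAction.bijective g) _ _ fun _ => rfl
    _ = 𝔼 y : X, f y := Fintype.expect_const _

theorem MeasureTheory.measurePreserving_comp_perm_pi {ι Z : Type*} [Fintype ι]
    [MeasurableSpace Z] (ν : Measure Z) [SigmaFinite ν] (σ : Equiv.Perm ι) :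
    MeasurePreserving (fun x : ι → Z => x ∘ σ) (Measure.pi fun _ => ν) (Measure.pi fun _ => ν) := by
  convert measurePreserving_piCongrLeft (fun _ : ι => ν) σ.symm using 1
  ext x i
  rw [MeasurableEquiv.coe_piCongrLeft, Equiv.piCongrLeft_apply_eq_cast]
  simp

theorem ProbabilityTheory.iIndepFun.measurePreserving_pi {Ω ι Z : Type*} [MeasurableSpace Ω]
    [MeasurableSpace Z] [Fintype ι] {μ : Measure Ω} [IsProbabilityMeasure μ] {ν : Measure Z}
    {z : ι → Ω → Z} (hindep : iIndepFun z μ) (hzm : ∀ i, Measurable (z i))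
    (hid : ∀ i, μ.map (z i) = ν) :
    MeasurePreserving (fun ω i => z i ω) μ (Measure.pi fun _ => ν) where
  measurable := measurable_pi_lambda _ hzm
  map_eq := by
    rw [hindep.map_fun_eq_pi_map fun i => (hzm i).aemeasurable]
    simp only [hid]

namespace MeasureTheory

variable {X G : Type*} [MeasurableSpace X] {μ : Measure X} [Fintype G] [Nonempty G]
  {T : G → X → X}

theorem lintegral_ofReal_expect_comp (hT : ∀ g, MeasurePreserving (T g) μ μ) {f : X → ℝ}
    (hf : Measurable f) (hf0 : 0 ≤ f) :
    ∫⁻ x, ENNReal.ofReal (𝔼 g, f (T g x)) ∂μ = ∫⁻ x, ENNReal.ofReal (f x) ∂μ := by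
  have hcard : (Fintype.card G : ℝ≥0∞) ≠ 0 := by exact_mod_cast Fintype.card_ne_zero
  have h_sum : ∀ x, ENNReal.ofReal (𝔼 g, f (T g x))
      = (Fintype.card G : ℝ≥0∞)⁻¹ * ∑ g, ENNReal.ofReal (f (T g x)) := fun x => by
    rw [Fintype.expect_eq_sum_div_card, div_eq_inv_mul, ENNReal.ofReal_mul (by positivity),
      ENNReal.ofReal_sum_of_nonneg fun g _ => hf0 _, ENNReal.ofReal_inv_of_pos (by positivity),
      ENNReal.ofReal_natCast]
  have hfT : ∀ g, Measurable fun x => ENNReal.ofReal (f (T g x)) :=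
    fun g => (hf.comp (hT g).measurable).ennreal_ofReal
  simp_rw [h_sum]
  rw [lintegral_const_mul _ (Finset.measurable_sum _ fun g _ => hfT g),
    lintegral_finsetSum _ fun g _ => hfT g,
    Finset.sum_congr rfl fun g _ => (hT g).lintegral_comp hf.ennreal_ofReal,
    Finset.sum_const, Finset.card_univ, nsmul_eq_mul, ← mul_assoc,
    ENNReal.inv_mul_cancel hcard (ENNReal.natCast_ne_top _), one_mul]

theorem lintegral_ofReal_exp_expect_comp_le (hT : ∀ g, MeasurePreserving (T g) μ μ)
    {f : X → ℝ} (hf : Measurable f) :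
    ∫⁻ x, ENNReal.ofReal (exp (𝔼 g, f (T g x))) ∂μ ≤ ∫⁻ x, ENNReal.ofReal (exp (f x)) ∂μ :=
  calc ∫⁻ x, ENNReal.ofReal (exp (𝔼 g, f (T g x))) ∂μ
      ≤ ∫⁻ x, ENNReal.ofReal (𝔼 g, exp (f (T g x))) ∂μ := lintegral_mono fun _ =>
        ENNReal.ofReal_le_ofReal <|
          convexOn_exp.map_expect_le Finset.univ_nonempty fun _ _ => Set.mem_univ _
    _ = ∫⁻ x, ENNReal.ofReal (exp (f x)) ∂μ :=
        lintegral_ofReal_expect_comp hT hf.exp fun _ => (exp_pos _).le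

end MeasureTheory

noncomputable section UStatistic

variable {Z : Type*} {n k : ℕ}

def blockEmbedding (i : Fin (n / k)) : Fin k ↪ Fin n where
  toFun j := ⟨k * i + j, calc
    k * i + j < k * (i + 1) := by rw [mul_add, mul_one]; exact Nat.add_lt_add_left j.isLt _
    _ ≤ k * (n / k) := Nat.mul_le_mul_left _ i.isLt
    _ ≤ n := Nat.mul_div_le n k⟩
  inj' _ _ h := Fin.ext (Nat.add_left_cancel (Fin.val_eq_of_eq h))

def uStatistic (κ : (Fin k → Z) → ℝ) (x : Fin n → Z) : ℝ :=
  𝔼 e : Fin k ↪ Fin n, κ (x ∘ e)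

def blockAverage (κ : (Fin k → Z) → ℝ) (x : Fin n → Z) : ℝ :=
  𝔼 i : Fin (n / k), κ (x ∘ blockEmbedding i)

theorem uStatistic_eq_inv_mul_sum (κ : (Fin k → Z) → ℝ) (x : Fin n → Z) :
    uStatistic κ x = (n.descFactorial k : ℝ)⁻¹ * ∑ e : Fin k ↪ Fin n, κ (x ∘ e) := by
  rw [uStatistic, Fintype.expect_eq_sum_div_card, Fintype.card_embedding_eq, Fintype.card_fin,
    Fintype.card_fin, div_eq_inv_mul]

theorem blockAverage_eq_inv_mul_sum (κ : (Fin k → Z) → ℝ) (y : ℕ → Z) :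
    blockAverage κ (fun i : Fin n => y i)
      = ((n / k : ℕ) : ℝ)⁻¹ * ∑ i ∈ Finset.range (n / k), κ (fun j => y (k * i + j)) := by
  rw [blockAverage, Fintype.expect_eq_sum_div_card, Fintype.card_fin, div_eq_inv_mul,
    ← Fin.sum_univ_eq_sum_range (fun i => κ fun j => y (k * i + j))]
  rfl

theorem measurable_uStatistic [MeasurableSpace Z] {κ : (Fin k → Z) → ℝ} (hκ : Measurable κ) :
    Measurable (uStatistic (n := n) κ) := by
  simp_rw [funext (uStatistic_eq_inv_mul_sum κ)]
  fun_prop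

theorem measurable_blockAverage [MeasurableSpace Z] {κ : (Fin k → Z) → ℝ} (hκ : Measurable κ) :
    Measurable (blockAverage (n := n) κ) := by
  unfold blockAverage
  simp_rw [Fintype.expect_eq_sum_div_card]
  fun_prop

theorem uStatistic_eq_expect_blockAverage (hk : 0 < k) (hkn : k ≤ n) (κ : (Fin k → Z) → ℝ)
    (x : Fin n → Z) :
    uStatistic κ x = 𝔼 σ : Equiv.Perm (Fin n), blockAverage κ (x ∘ σ) := by
  have : Nonempty (Fin (n / k)) := ⟨⟨0, Nat.div_pos hkn hk⟩⟩
  have := Equiv.Perm.isMultiplyPretransitive (Fin n) k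
  calc uStatistic κ x = 𝔼 _i : Fin (n / k), uStatistic κ x := (Fintype.expect_const _).symm
    _ = 𝔼 i : Fin (n / k), 𝔼 σ : Equiv.Perm (Fin n), κ (x ∘ (σ • blockEmbedding i)) :=
      Finset.expect_congr rfl fun i _ => (MulAction.expect_smul_eq_expect _ _).symm
    _ = 𝔼 σ : Equiv.Perm (Fin n), blockAverage κ (x ∘ σ) := Finset.expect_comm _ _ _

theorem lintegral_exp_uStatistic_le_lintegral_exp_blockAverage [MeasurableSpace Z]
    (hk : 0 < k) (hkn : k ≤ n) (ν : Measure Z) [SigmaFinite ν] {κ : (Fin k → Z) → ℝ}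
    (hκ : Measurable κ) (t : ℝ) :
    ∫⁻ x : Fin n → Z, ENNReal.ofReal (exp (t * uStatistic κ x)) ∂(Measure.pi fun _ => ν)
      ≤ ∫⁻ x : Fin n → Z, ENNReal.ofReal (exp (t * blockAverage κ x)) ∂(Measure.pi fun _ => ν) := by
  simp_rw [uStatistic_eq_expect_blockAverage hk hkn, Finset.mul_expect]
  exact lintegral_ofReal_exp_expect_comp_le (T := fun (σ : Equiv.Perm (Fin n)) x => x ∘ σ)
    (f := fun x => t * blockAverage κ x) (measurePreserving_comp_perm_pi ν)
    ((measurable_blockAverage hκ).const_mul t)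

end UStatistic

theorem mgf_dominance_of_U_statistic_general
    {Ω Z : Type*} [MeasurableSpace Ω] [MeasurableSpace Z]
    (μ : Measure Ω) [IsProbabilityMeasure μ]
    (ν : Measure Z) [IsProbabilityMeasure ν]
    (z : ℕ → Ω → Z) (hzm : ∀ i, Measurable (z i))
    (hindep : iIndepFun z μ)
    (hid : ∀ i, Measure.map (z i) μ = ν)
    (n k : ℕ) (hk : 0 < k) (hkn : k ≤ n)
    (κ : (Fin k → Z) → ℝ) (hκm : Measurable κ)
    (t : ℝ) :
    ∫⁻ ω, ENNReal.ofReal (Real.exp (t *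
        (((n.descFactorial k : ℝ))⁻¹ *
          ∑ e : Fin k ↪ Fin n, κ (fun i => z (e i) ω)))) ∂μ
      ≤ ∫⁻ ω, ENNReal.ofReal (Real.exp (t *
        ((((n / k : ℕ) : ℝ))⁻¹ *
          ∑ i ∈ Finset.range (n / k), κ (fun j => z (k * i + j) ω)))) ∂μ := by
  set X : Ω → Fin n → Z := fun ω i => z i ω
  have hX : MeasurePreserving X μ (Measure.pi fun _ => ν) :=
    (hindep.precomp Fin.val_injective).measurePreserving_pi (fun i => hzm i) (fun i => hid i)
  have hU : ∀ ω, (n.descFactorial k : ℝ)⁻¹ * ∑ e : Fin k ↪ Fin n, κ (fun i => z (e i) ω)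
      = uStatistic κ (X ω) := fun ω => (uStatistic_eq_inv_mul_sum κ (X ω)).symm
  have hB : ∀ ω, ((n / k : ℕ) : ℝ)⁻¹ * ∑ i ∈ Finset.range (n / k), κ (fun j => z (k * i + j) ω)
      = blockAverage κ (X ω) := fun ω => (blockAverage_eq_inv_mul_sum κ fun i => z i ω).symm
  have hUm := measurable_uStatistic (n := n) hκm
  have hBm := measurable_blockAverage (n := n) hκm
  have key := lintegral_exp_uStatistic_le_lintegral_exp_blockAverage hk hkn ν hκm t
  rw [← hX.lintegral_comp (by fun_prop), ← hX.lintegral_comp (by fun_prop)] at key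
  simpa only [hU, hB] using key

/-- **MGF dominance of U-statistics (Hoeffding).**
For i.i.d. data `z 0, z 1, ...` with common law `ν`, a kernel `κ` of order `k ≤ n` with
`E|κ| < ∞`, the moment generating function of the U-statistic
`U = (n(n-1)⋯(n-k+1))⁻¹ Σ_{(i₁,…,i_k) distinct} κ(z_{i₁},…,z_{i_k})`
is dominated by that of the block average
`κ̄ = ⌊n/k⌋⁻¹ Σ_{i=1}^{⌊n/k⌋} κ(z_{k(i-1)+1},…,z_{ki})`:
for every `t ∈ ℝ`, `E[exp(t U)] ≤ E[exp(t κ̄)]`. -/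
theorem mgf_dominance_of_U_statistic
    {Ω Z : Type*} [MeasurableSpace Ω] [MeasurableSpace Z]
    (μ : Measure Ω) [IsProbabilityMeasure μ]
    (ν : Measure Z) [IsProbabilityMeasure ν]
    (z : ℕ → Ω → Z) (hzm : ∀ i, Measurable (z i))
    (hindep : iIndepFun z μ)
    (hid : ∀ i, Measure.map (z i) μ = ν)
    (n k : ℕ) (hk : 0 < k) (hkn : k ≤ n)
    (κ : (Fin k → Z) → ℝ) (hκm : Measurable κ)
    (hint : Integrable κ (Measure.pi fun _ : Fin k => ν))
    (t : ℝ) :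
    ∫⁻ ω, ENNReal.ofReal (Real.exp (t *
        (((n.descFactorial k : ℝ))⁻¹ *
          ∑ e : Fin k ↪ Fin n, κ (fun i => z (e i) ω)))) ∂μ
      ≤ ∫⁻ ω, ENNReal.ofReal (Real.exp (t *
        ((((n / k : ℕ) : ℝ))⁻¹ *
          ∑ i ∈ Finset.range (n / k), κ (fun j => z (k * i + j) ω)))) ∂μ :=
  mgf_dominance_of_U_statistic_general μ ν z hzm hindep hid n k hk hkn κ hκm t
end

section
/- Let γ ∈ (0, 1/2] and suppose p ∈ [γ, 1−γ] and q ∈ (0,1). Then the Bernoulli KL divergence satisfies D_KL(p‖q) ≥ −ln(2·(q(1−q))^γ). -/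
set_option autoImplicit false

/-- KL divergence between Bernoulli(p) and Bernoulli(q). -/
noncomputable def klBer (p q : ℝ) : ℝ :=
  p * Real.log (p / q) + (1 - p) * Real.log ((1 - p) / (1 - q))

/-- If `γ ∈ (0,1/2]`, `p ∈ [γ, 1−γ]` and `q ∈ (0,1)`, then
`D_KL(p‖q) ≥ −ln(2·(q(1−q))^γ)`. -/
theorem klBer_ge_neg_log (γ p q : ℝ)
    (hγ : γ ∈ Set.Ioc (0 : ℝ) (1 / 2))
    (hp : p ∈ Set.Icc γ (1 - γ)) (hq : q ∈ Set.Ioo (0 : ℝ) 1) :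
    klBer p q ≥ -Real.log (2 * (q * (1 - q)) ^ γ) := by
  obtain ⟨hγ0, hγ2⟩ := hγ
  obtain ⟨hpγ, hp1γ⟩ := hp
  obtain ⟨hq0, hq1⟩ := hq
  have hp0 : 0 < p := lt_of_lt_of_le hγ0 hpγ
  have hp1 : p < 1 := lt_of_le_of_lt hp1γ (by linarith)
  have h1p : 0 < 1 - p := by linarith
  have h1q : 0 < 1 - q := by linarith
  -- entropy bound: p log p + (1-p) log (1-p) ≥ - log 2
  have e1 : Real.log (1 / (2 * p)) ≤ 1 / (2 * p) - 1 :=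
    Real.log_le_sub_one_of_pos (by positivity)
  have e2 : Real.log (1 / (2 * (1 - p))) ≤ 1 / (2 * (1 - p)) - 1 :=
    Real.log_le_sub_one_of_pos (by positivity)
  rw [Real.log_div one_ne_zero (by positivity), Real.log_one,
    Real.log_mul two_ne_zero (ne_of_gt hp0)] at e1
  rw [Real.log_div one_ne_zero (by positivity), Real.log_one,
    Real.log_mul two_ne_zero (ne_of_gt h1p)] at e2
  have hent : p * Real.log p + (1 - p) * Real.log (1 - p) ≥ -Real.log 2 := by
    have e1' : p * Real.log p ≥ p * Real.log 2 * (-1) + (p - 1/2) := by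
      have := mul_le_mul_of_nonneg_left e1 (le_of_lt hp0)
      have hp' : p * (1 / (2 * p)) = 1 / 2 := by field_simp
      nlinarith
    have e2' : (1 - p) * Real.log (1 - p) ≥ (1 - p) * Real.log 2 * (-1) + ((1 - p) - 1/2) := by
      have := mul_le_mul_of_nonneg_left e2 (le_of_lt h1p)
      have hp' : (1 - p) * (1 / (2 * (1 - p))) = 1 / 2 := by field_simp
      nlinarith
    nlinarith
  -- cross entropy bound
  have hlq : Real.log q ≤ 0 := Real.log_nonpos (le_of_lt hq0) (le_of_lt hq1)
  have hlq' : Real.log (1 - q) ≤ 0 := Real.log_nonpos (le_of_lt h1q) (by linarith)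
  have hc1 : -(p * Real.log q) ≥ -(γ * Real.log q) := by nlinarith
  have hc2 : -((1 - p) * Real.log (1 - q)) ≥ -(γ * Real.log (1 - q)) := by nlinarith
  -- rewrite both sides
  have hrhs : Real.log (2 * (q * (1 - q)) ^ γ)
      = Real.log 2 + γ * (Real.log q + Real.log (1 - q)) := by
    rw [Real.log_mul two_ne_zero (by positivity),
      Real.log_rpow (by positivity),
      Real.log_mul (ne_of_gt hq0) (ne_of_gt h1q)]
  have hkl : klBer p q = p * Real.log p + (1 - p) * Real.log (1 - p)
      - p * Real.log q - (1 - p) * Real.log (1 - q) := by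
    unfold klBer
    rw [Real.log_div (ne_of_gt hp0) (ne_of_gt hq0),
      Real.log_div (ne_of_gt h1p) (ne_of_gt h1q)]
    ring
  rw [hkl, hrhs]
  linarith
end

section
/- Consider the stochastic linear program min_{θ∈[0,1]} E[zθ] where z is a real random variable with a strictly positive density everywhere, symmetric about its mean E[z] = 1, and let z_1,...,z_n be i.i.d. copies of z. Let θ̂ ∈ argmin_{θ∈[0,1]} ((1/n)Σ_{i=1}^n z_i)·θ be the SAA solution (so θ̂ = 1 whenever (1/n)Σ z_i < 0). Then for every δ ∈ (0,1), P(L(θ̂) > min_{θ∈[0,1]} L(θ) + δ) ≥ P(θ̂ = 1) ≥ (1/2)·P(z < 1−n), where L(θ) = E[zθ] = θ. -/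
set_option autoImplicit false

open MeasureTheory ProbabilityTheory
open scoped ENNReal

/-! Since `E[z] = 1`, `L` is the identity, so whenever `θ̂ = 1` the excess risk is `1 > δ`.
The SAA solution is `1` as soon as `z₀ + (z₁ + ⋯ + z_{n-1}) < 0`, which happens when `z₀ < 1 - n`
and `z₁ + ⋯ + z_{n-1} ≤ n - 1`. These events are independent, and the second one has probability
at least `1/2`: the reflection `zᵢ ↦ 2 - zᵢ` preserves the law of the i.i.d. sample and maps
`z₁ + ⋯ + z_{n-1}` to `2(n - 1) - (z₁ + ⋯ + z_{n-1})`, so this sum is symmetric about `n - 1`. -/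

namespace ProbabilityTheory

variable {Ω Ω' : Type*} {mΩ : MeasurableSpace Ω} {mΩ' : MeasurableSpace Ω'}
  {μ : Measure Ω} {μ' : Measure Ω'}

lemma IdentDistrib.finsetSum {ι E : Type*} [Countable ι] [AddCommMonoid E] [MeasurableSpace E]
    [MeasurableAdd₂ E] {X : ι → Ω → E} {Y : ι → Ω' → E}
    (h : ∀ i, IdentDistrib (X i) (Y i) μ μ') (hX : iIndepFun X μ) (hY : iIndepFun Y μ')
    (s : Finset ι) : IdentDistrib (∑ i ∈ s, X i) (∑ i ∈ s, Y i) μ μ' := by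
  have hsum : Measurable fun x : ι → E => ∑ i ∈ s, x i :=
    Finset.measurable_sum s fun i _ => measurable_pi_apply i
  rw [Finset.sum_fn, Finset.sum_fn]
  exact (IdentDistrib.pi h hX hY).comp hsum

lemma identDistrib_reflect_of_map_eq {X : Ω → ℝ} {a : ℝ} (hX : Measurable X)
    (h : (μ.map X).map (fun x => 2 * a - x) = μ.map X) :
    IdentDistrib X (fun ω => 2 * a - X ω) μ μ where
  aemeasurable_fst := hX.aemeasurable
  aemeasurable_snd := (measurable_const.sub hX).aemeasurable
  map_eq := by rw [← h, Measure.map_map (by fun_prop) hX]; rfl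

lemma iIndepFun.identDistrib_finsetSum_reflect {ι : Type*} [Countable ι] {X : ι → Ω → ℝ}
    (hX : iIndepFun X μ) {a : ℝ} (hsymm : ∀ i, IdentDistrib (X i) (fun ω => 2 * a - X i ω) μ μ)
    (s : Finset ι) :
    IdentDistrib (∑ i ∈ s, X i) (fun ω => 2 * (s.card * a) - (∑ i ∈ s, X i) ω) μ μ := by
  have hreflect : iIndepFun (fun i ω => 2 * a - X i ω) μ :=
    hX.comp (fun _ x => 2 * a - x) fun _ => measurable_const.sub measurable_id
  convert IdentDistrib.finsetSum hsymm hX hreflect s using 1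
  ext ω
  simp only [Finset.sum_apply, Finset.sum_sub_distrib, Finset.sum_const, nsmul_eq_mul]
  ring

lemma half_le_measure_le_of_identDistrib_reflect [IsProbabilityMeasure μ] {X : Ω → ℝ} {c : ℝ}
    (h : IdentDistrib X (fun ω => 2 * c - X ω) μ μ) : 1 / 2 ≤ μ {ω | X ω ≤ c} := by
  have hreflect : μ {ω | X ω ≤ c} = μ {ω | c ≤ X ω} := by
    have hset : {ω | c ≤ X ω} = (fun ω => 2 * c - X ω) ⁻¹' Set.Iic c := by
      ext ω
      simp only [Set.mem_ofPred_eq, Set.mem_preimage, Set.mem_Iic]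
      constructor <;> intro <;> linarith
    rw [hset]
    exact h.measure_mem_eq measurableSet_Iic
  have hcover : (1 : ℝ≥0∞) ≤ μ {ω | X ω ≤ c} + μ {ω | c ≤ X ω} :=
    calc (1 : ℝ≥0∞) = μ ({ω | X ω ≤ c} ∪ {ω | c ≤ X ω}) := by
          rw [← measure_univ (μ := μ)]; congr 1; ext ω; simp [le_total]
      _ ≤ _ := measure_union_le _ _
  refine ENNReal.div_le_of_le_mul ?_
  rw [mul_two]
  nth_rw 2 [hreflect]
  exact hcover

end ProbabilityTheory

theorem saa_lp_polynomial_tail_general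
    {Ω : Type*} [MeasurableSpace Ω] (μ : Measure Ω) [IsProbabilityMeasure μ]
    (ν : Measure ℝ)
    (hmean : ∫ x, x ∂ν = 1)
    (hsymm : Measure.map (fun x => 2 - x) ν = ν)
    (z : ℕ → Ω → ℝ) (hzm : ∀ i, Measurable (z i))
    (hindep : iIndepFun z μ)
    (hid : ∀ i, Measure.map (z i) μ = ν)
    (n : ℕ) (hn : 0 < n)
    (θhat : Ω → ℝ)
    (hθmem : ∀ ω, θhat ω ∈ Set.Icc (0 : ℝ) 1)
    (hargmin : ∀ ω, ∀ θ ∈ Set.Icc (0 : ℝ) 1,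
      ((n : ℝ)⁻¹ * ∑ i ∈ Finset.range n, z i ω) * θhat ω ≤
        ((n : ℝ)⁻¹ * ∑ i ∈ Finset.range n, z i ω) * θ)
    (L : ℝ → ℝ) (hL : ∀ θ, L θ = ∫ x, x * θ ∂ν)
    (δ : ℝ) (hδ : δ ∈ Set.Ioo (0 : ℝ) 1) :
    μ {ω | L (θhat ω) > (⨅ θ : Set.Icc (0 : ℝ) 1, L θ) + δ} ≥ μ {ω | θhat ω = 1} ∧
    μ {ω | θhat ω = 1} ≥ (1 / 2 : ℝ≥0∞) * ν (Set.Iio (1 - n)) := by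
  obtain rfl : L = id := funext fun θ => by rw [hL, integral_mul_const, hmean, one_mul, id]
  have hmin : ⨅ θ : Set.Icc (0 : ℝ) 1, (θ : ℝ) = 0 := by
    rw [← sInf_eq_iInf', csInf_Icc zero_le_one]
  refine ⟨measure_mono fun ω (hω : θhat ω = 1) => ?_, ?_⟩
  · show θhat ω > (⨅ θ : Set.Icc (0 : ℝ) 1, (θ : ℝ)) + δ
    linarith [hδ.2, hmin]
  set S := ∑ i ∈ Finset.Ico 1 n, z i
  have hS_half : 1 / 2 ≤ μ {ω | S ω ≤ n - 1} := by
    have hz_reflect i : IdentDistrib (z i) (fun ω => 2 * 1 - z i ω) μ μ :=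
      identDistrib_reflect_of_map_eq (hzm i) (by rw [hid, mul_one, hsymm])
    have hS_reflect := hindep.identDistrib_finsetSum_reflect hz_reflect (Finset.Ico 1 n)
    rw [Nat.card_Ico, Nat.cast_sub hn, Nat.cast_one, mul_one] at hS_reflect
    exact half_le_measure_le_of_identDistrib_reflect hS_reflect
  have hS_indep : IndepFun (z 0) S μ :=
    (hindep.indepFun_finsetSum_of_notMem hzm (by simp)).symm
  have hsaa : z 0 ⁻¹' Set.Iio (1 - n) ∩ S ⁻¹' Set.Iic (n - 1) ⊆ {ω | θhat ω = 1} := by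
    rintro ω ⟨hz0 : z 0 ω < 1 - n, hSω : S ω ≤ n - 1⟩
    have hsum : ∑ i ∈ Finset.range n, z i ω < 0 := by
      rw [Finset.sum_range_eq_add_Ico _ hn, ← Finset.sum_apply]
      linarith
    have hmean_neg : (n : ℝ)⁻¹ * ∑ i ∈ Finset.range n, z i ω < 0 :=
      mul_neg_of_pos_of_neg (by positivity) hsum
    have hle := (mul_le_mul_left_of_neg hmean_neg).1 (hargmin ω 1 ⟨zero_le_one, le_rfl⟩)
    exact le_antisymm (hθmem ω).2 hle
  calc μ {ω | θhat ω = 1}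
      ≥ μ (z 0 ⁻¹' Set.Iio (1 - n) ∩ S ⁻¹' Set.Iic (n - 1)) := measure_mono hsaa
    _ = ν (Set.Iio (1 - n)) * μ {ω | S ω ≤ n - 1} := by
      rw [hS_indep.measure_inter_preimage_eq_mul _ _ measurableSet_Iio measurableSet_Iic,
        ← hid 0, Measure.map_apply (hzm 0) measurableSet_Iio]
      rfl
    _ ≥ (1 / 2 : ℝ≥0∞) * ν (Set.Iio (1 - n)) := by
      rw [mul_comm]
      exact mul_le_mul_left hS_half _

/-- **Polynomial generalization tail of SAA for a stochastic LP (Example 1).**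
Let `z` have a strictly positive density everywhere, be symmetric about its mean
`E[z] = 1`, and let `z 0, z 1, ...` be i.i.d. copies.  Let `θ̂` be an SAA solution of
`min_{θ∈[0,1]} ((1/n)Σᵢ zᵢ)·θ`, and `L θ = E[zθ] (= θ)`.  Then for every `δ ∈ (0,1)`,
`P(L(θ̂) > min_{θ∈[0,1]} L(θ) + δ) ≥ P(θ̂ = 1) ≥ (1/2)·P(z < 1 − n)`. -/
theorem saa_lp_polynomial_tail
    {Ω : Type*} [MeasurableSpace Ω] (μ : Measure Ω) [IsProbabilityMeasure μ]
    (ν : Measure ℝ) [IsProbabilityMeasure ν]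
    (f : ℝ → ℝ) (hfpos : ∀ x, 0 < f x) (hfm : Measurable f)
    (hdens : ν = MeasureTheory.volume.withDensity (fun x => ENNReal.ofReal (f x)))
    (hmean : ∫ x, x ∂ν = 1)
    (hsymm : Measure.map (fun x => 2 - x) ν = ν)
    (z : ℕ → Ω → ℝ) (hzm : ∀ i, Measurable (z i))
    (hindep : iIndepFun z μ)
    (hid : ∀ i, Measure.map (z i) μ = ν)
    (n : ℕ) (hn : 0 < n)
    (θhat : Ω → ℝ)
    (hθmem : ∀ ω, θhat ω ∈ Set.Icc (0 : ℝ) 1)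
    (hargmin : ∀ ω, ∀ θ ∈ Set.Icc (0 : ℝ) 1,
      ((n : ℝ)⁻¹ * ∑ i ∈ Finset.range n, z i ω) * θhat ω ≤
        ((n : ℝ)⁻¹ * ∑ i ∈ Finset.range n, z i ω) * θ)
    (L : ℝ → ℝ) (hL : ∀ θ, L θ = ∫ x, x * θ ∂ν)
    (δ : ℝ) (hδ : δ ∈ Set.Ioo (0 : ℝ) 1) :
    μ {ω | L (θhat ω) > (⨅ θ : Set.Icc (0 : ℝ) 1, L θ) + δ} ≥ μ {ω | θhat ω = 1} ∧
    μ {ω | θhat ω = 1} ≥ (1 / 2 : ℝ≥0∞) * ν (Set.Iio (1 - n)) :=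
  saa_lp_polynomial_tail_general μ ν hmean hsymm z hzm hindep hid n hn θhat hθmem hargmin L hL δ hδ
end

section
/- Consider a finite decision space Θ and the set-valued learning algorithm 𝔸(z_1,...,z_k) := {θ ∈ Θ : (1/k)Σ_{i=1}^k l(θ,z_i) ≤ min_{θ'∈Θ} (1/k)Σ_{i=1}^k l(θ',z_i) + ε} for a fixed ε ≥ 0, with p_k(θ) := P(θ ∈ 𝔸(z_1,...,z_k)). Then for every δ ≥ 0 with ε < δ: (i) max_{θ∈Θ} p_k(θ) ≥ 1 − T_k(ε/2); (ii) max_{θ∈Θ∖Θ^δ} p_k(θ) ≤ T_k((δ−ε)/2); and hence (iii) η̄_{k,δ} := max_{θ∈Θ} p_k(θ) − max_{θ∈Θ∖Θ^δ} p_k(θ) ≥ 1 − T_k(ε/2) − T_k((δ−ε)/2). -/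
set_option autoImplicit false

open MeasureTheory ProbabilityTheory Real
open scoped ENNReal Classical

/-!
If the empirical objective is uniformly `t`-close to `L`, then an `ε`-minimiser of one of them is
an `(ε + 2t)`-minimiser of the other. Hence, outside the event `{sup deviation > ε/2}`, every
minimiser of `L` lies in `𝔸`, which gives (i); and a point that is not `δ`-optimal for `L` can be
in `𝔸` only on the event `{sup deviation > (δ - ε)/2}`, which gives (ii).
-/

section UniformApproximation

variable {ι : Type*} [Finite ι] [Nonempty ι]

theorem le_ciInf_add_of_le_ciInf_add {f g : ι → ℝ} {t ε : ℝ} (hfg : ∀ i, |f i - g i| ≤ t)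
    {i : ι} (hi : f i ≤ (⨅ j, f j) + ε) : g i ≤ (⨅ j, g j) + (ε + 2 * t) := by
  obtain ⟨j, hj⟩ := exists_eq_ciInf_of_finite (f := g)
  have hfj : ⨅ j, f j ≤ f j := ciInf_le (Finite.bddBelow_range f) j
  have hi' := abs_le.mp (hfg i)
  have hj' := abs_le.mp (hfg j)
  linarith [hi'.1, hj'.2]

variable {Ω : Type*} {f : ι → Ω → ℝ} {g : ι → ℝ}

theorem forall_abs_sub_le_of_not_lt_ciSup {t : ℝ} {ω : Ω}
    (hω : ¬ t < ⨆ i, |f i ω - g i|) (i : ι) : |f i ω - g i| ≤ t :=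
  (ciSup_le_iff (Finite.bddAbove_range _)).mp (not_lt.mp hω) i

theorem compl_setOf_lt_ciSup_abs_sub_subset {i₀ : ι} (hi₀ : g i₀ = ⨅ i, g i) (ε : ℝ) :
    {ω | ε / 2 < ⨆ i, |f i ω - g i|}ᶜ ⊆ {ω | f i₀ ω ≤ (⨅ i, f i ω) + ε} := by
  intro ω hω
  have hclose i : |g i - f i ω| ≤ ε / 2 :=
    abs_sub_comm (f i ω) (g i) ▸ forall_abs_sub_le_of_not_lt_ciSup hω i
  have := le_ciInf_add_of_le_ciInf_add hclose (ε := 0) (by rw [add_zero, hi₀])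
  show f i₀ ω ≤ _
  linarith

theorem setOf_le_ciInf_add_subset {ε δ : ℝ} {i : ι} (hi : (⨅ j, g j) + δ < g i) :
    {ω | f i ω ≤ (⨅ j, f j ω) + ε} ⊆ {ω | (δ - ε) / 2 < ⨆ j, |f j ω - g j|} := by
  intro ω hω
  by_contra hdev
  have := le_ciInf_add_of_le_ciInf_add (forall_abs_sub_le_of_not_lt_ciSup hdev) hω
  linarith

end UniformApproximation

theorem one_sub_measureReal_le_of_compl_subset {Ω : Type*} [MeasurableSpace Ω] {μ : Measure Ω}
    [IsProbabilityMeasure μ] {s u : Set Ω} (h : sᶜ ⊆ u) : 1 - μ.real s ≤ μ.real u := by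
  have := calc
    1 = μ.real (s ∪ sᶜ) := by rw [Set.union_compl_self, probReal_univ]
    _ ≤ μ.real s + μ.real sᶜ := measureReal_union_le s sᶜ
    _ ≤ μ.real s + μ.real u := by gcongr; exact measure_ne_top μ u
  linarith

theorem eps_optimality_vote_sensitivity_bounds_general
    {Ω Θ : Type*} [MeasurableSpace Ω]
    [Fintype Θ] [Nonempty Θ]
    (μ : Measure Ω) [IsProbabilityMeasure μ]
    (L : Θ → ℝ)
    -- the empirical objective on the first `k` data points
    (emp : Θ → Ω → ℝ)
    -- `p_k(θ) = P(θ ∈ 𝔸(z_1,…,z_k))`, i.e. the probability that `θ` is `ε`-optimal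
    (ε : ℝ)
    (pk : Θ → ℝ≥0∞)
    (hpk : ∀ θ, pk θ = μ {ω | emp θ ω ≤ (⨅ θ' : Θ, emp θ' ω) + ε})
    -- the tail function of the maximal empirical deviation
    (T : ℝ → ℝ)
    (hT : ∀ t, T t = (μ {ω | (⨆ θ : Θ, |emp θ ω - L θ|) > t}).toReal)
    (δ : ℝ) :
    ((Finset.univ.sup pk).toReal ≥ 1 - T (ε / 2)) ∧
    (((Finset.univ.filter fun θ => L θ > (⨅ θ' : Θ, L θ') + δ).sup pk).toReal ≤
      T ((δ - ε) / 2)) ∧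
    ((Finset.univ.sup pk).toReal -
        ((Finset.univ.filter fun θ => L θ > (⨅ θ' : Θ, L θ') + δ).sup pk).toReal ≥
      1 - T (ε / 2) - T ((δ - ε) / 2)) := by
  obtain ⟨θmin, hθmin⟩ := exists_eq_ciInf_of_finite (f := L)
  have hi : (Finset.univ.sup pk).toReal ≥ 1 - T (ε / 2) :=
    calc 1 - T (ε / 2) ≤ μ.real {ω | emp θmin ω ≤ (⨅ θ, emp θ ω) + ε} :=
          hT _ ▸ one_sub_measureReal_le_of_compl_subset
            (compl_setOf_lt_ciSup_abs_sub_subset hθmin ε)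
      _ = (pk θmin).toReal := by rw [hpk]; rfl
      _ ≤ (Finset.univ.sup pk).toReal :=
          ENNReal.toReal_mono (ne_top_of_le_ne_top ENNReal.one_ne_top
            (Finset.sup_le fun θ _ => hpk θ ▸ prob_le_one)) (Finset.le_sup (Finset.mem_univ θmin))
  have hii : ((Finset.univ.filter fun θ => L θ > (⨅ θ' : Θ, L θ') + δ).sup pk).toReal ≤
      T ((δ - ε) / 2) :=
    hT _ ▸ ENNReal.toReal_mono (measure_ne_top _ _) (Finset.sup_le fun θ hθ =>
      hpk θ ▸ measure_mono (setOf_le_ciInf_add_subset (Finset.mem_filter.mp hθ).2))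
  exact ⟨hi, hii, by linarith⟩

/-- **Bounds on the generalization sensitivity for the ε-optimality vote (Lemma 8).**
For a finite decision space `Θ` and the set-valued learner
`𝔸(z_1,…,z_k) = {θ : (1/k)Σᵢ l(θ,zᵢ) ≤ min_{θ'} (1/k)Σᵢ l(θ',zᵢ) + ε}` with `ε ≥ 0`,
and `T_k(t) = P(sup_θ |(1/k)Σᵢ l(θ,zᵢ) − L(θ)| > t)`, for every `δ ≥ 0` with `ε < δ`:
(i) `max_θ p_k(θ) ≥ 1 − T_k(ε/2)`, (ii) `max_{θ∈Θ∖Θ^δ} p_k(θ) ≤ T_k((δ−ε)/2)`,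
hence (iii) `η̄_{k,δ} ≥ 1 − T_k(ε/2) − T_k((δ−ε)/2)`. -/
theorem eps_optimality_vote_sensitivity_bounds
    {Ω Z Θ : Type*} [MeasurableSpace Ω] [MeasurableSpace Z]
    [Fintype Θ] [Nonempty Θ]
    (μ : Measure Ω) [IsProbabilityMeasure μ]
    (ν : Measure Z) [IsProbabilityMeasure ν]
    (z : ℕ → Ω → Z) (hzm : ∀ i, Measurable (z i))
    (hindep : iIndepFun z μ)
    (hid : ∀ i, Measure.map (z i) μ = ν)
    (l : Θ → Z → ℝ) (L : Θ → ℝ) (hL : ∀ θ, L θ = ∫ x, l θ x ∂ν)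
    (k : ℕ) (hk : 0 < k)
    -- the empirical objective on the first `k` data points
    (emp : Θ → Ω → ℝ)
    (hemp : ∀ θ ω, emp θ ω = (k : ℝ)⁻¹ * ∑ i ∈ Finset.range k, l θ (z i ω))
    -- `p_k(θ) = P(θ ∈ 𝔸(z_1,…,z_k))`, i.e. the probability that `θ` is `ε`-optimal
    (ε : ℝ) (hε : 0 ≤ ε)
    (pk : Θ → ℝ≥0∞)
    (hpk : ∀ θ, pk θ = μ {ω | emp θ ω ≤ (⨅ θ' : Θ, emp θ' ω) + ε})
    -- the tail function of the maximal empirical deviation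
    (T : ℝ → ℝ)
    (hT : ∀ t, T t = (μ {ω | (⨆ θ : Θ, |emp θ ω - L θ|) > t}).toReal)
    (δ : ℝ) (hδ : 0 ≤ δ) (hεδ : ε < δ) :
    ((Finset.univ.sup pk).toReal ≥ 1 - T (ε / 2)) ∧
    (((Finset.univ.filter fun θ => L θ > (⨅ θ' : Θ, L θ') + δ).sup pk).toReal ≤
      T ((δ - ε) / 2)) ∧
    ((Finset.univ.sup pk).toReal -
        ((Finset.univ.filter fun θ => L θ > (⨅ θ' : Θ, L θ') + δ).sup pk).toReal ≥
      1 - T (ε / 2) - T ((δ - ε) / 2)) :=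
  eps_optimality_vote_sensitivity_bounds_general μ L emp ε pk hpk T hT δ
end

section
/- Consider the linear regression model y_i = x_i·θ* + ε_i with θ* = 0, where x_i ∈ {−1,1}, the noises ε_1,...,ε_n are i.i.d., independent of the x_i, with zero mean, symmetric about 0, and satisfying P(ε_i > t) > C(t+1)^{−α} for all t > 0 and some constants C > 0, α > 0. Let θ_n^LS := proj_{[−1,1]}((Σ_{i=1}^n x_i y_i)/(Σ_{i=1}^n x_i²)) = proj_{[−1,1]}((1/n)Σ_{i=1}^n x_i ε_i) be the projected least-squares estimator. Then for every δ ∈ (0,1) and n > 1, the excess risk satisfies P((θ_n^LS)² > δ) > C·(n√δ + 1)^{−α}. -/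
set_option autoImplicit false

open MeasureTheory ProbabilityTheory Real Set

/-!
The estimator's excess risk exceeds `δ` exactly when `|∑ xᵢεᵢ| > n√δ`. Because the signs `xᵢ` are
independent of the symmetric i.i.d. noise, the products `xᵢεᵢ` are again i.i.d. with law `ν`. For
such a sum, `P(|ε₀ + R| > t) ≥ P(ε₀ > t)`: the events `{ε₀ > t, R ≥ 0}` and `{ε₀ < -t, R ≤ 0}`
are disjoint, lie in `{|ε₀ + R| > t}`, and by symmetry of `ε₀` have total probability
`P(ε₀ > t)·(P(R ≥ 0) + P(R ≤ 0)) ≥ P(ε₀ > t)`. The polynomial tail of `ν` at `t = n√δ` concludes.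
-/

lemma sq_max_neg_one_min_one (u : ℝ) : max (-1) (min 1 u) ^ 2 = min 1 (u ^ 2) := by
  rcases le_total u (-1) with h | h
  · rw [min_eq_right (by linarith), max_eq_left h, min_eq_left (by nlinarith)]
    norm_num
  rcases le_total 1 u with h' | h'
  · rw [min_eq_left h', max_eq_right (by norm_num), min_eq_left (by nlinarith)]
    norm_num
  · rw [min_eq_right h', max_eq_right h, min_eq_right (by nlinarith)]

lemma lt_sq_div_iff_mul_sqrt_lt_abs {δ u c : ℝ} (hδ : 0 ≤ δ) (hc : 0 < c) :
    δ < (u / c) ^ 2 ↔ c * √δ < |u| := by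
  rw [← sqrt_lt_sqrt_iff hδ, sqrt_sq_eq_abs, abs_div, abs_of_pos hc, lt_div_iff₀' hc]

section Symmetric

variable {ν : Measure ℝ}

lemma map_const_mul_eq_of_map_neg_eq (hν : ν.map (fun e => -e) = ν) {c : ℝ}
    (hc : c = 1 ∨ c = -1) : ν.map (c * ·) = ν := by
  rcases hc with rfl | rfl
  · simp
  · simpa using hν

lemma measure_Iio_neg_eq_of_map_neg_eq (hν : ν.map (fun e => -e) = ν) (t : ℝ) :
    ν (Iio (-t)) = ν (Ioi t) := by
  conv_lhs => rw [← hν]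
  rw [Measure.map_apply measurable_neg measurableSet_Iio, Set.neg_preimage, Set.neg_Iio, neg_neg]

lemma measure_Ioi_le_prod_lt_abs_add [SFinite ν] (hν : ν.map (fun e => -e) = ν)
    (ρ : Measure ℝ) [IsProbabilityMeasure ρ] {t : ℝ} (ht : 0 ≤ t) :
    ν (Ioi t) ≤ ν.prod ρ {p | t < |p.1 + p.2|} := by
  have hcover : 1 ≤ ρ (Ici 0) + ρ (Iic 0) := by
    rw [← measure_univ (μ := ρ), ← Ici_union_Iic (a := (0 : ℝ))]
    exact measure_union_le _ _
  have hdisj : Disjoint (Ioi t ×ˢ Ici (0 : ℝ)) (Iio (-t) ×ˢ Iic 0) :=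
    disjoint_prod.2 (Or.inl (Ioi_disjoint_Iio_of_le (by linarith)))
  have hsub : Ioi t ×ˢ Ici (0 : ℝ) ∪ Iio (-t) ×ˢ Iic 0 ⊆ {p | t < |p.1 + p.2|} := by
    rintro ⟨a, b⟩ (⟨ha, hb⟩ | ⟨ha, hb⟩) <;>
      simp only [mem_Ioi, mem_Iio, mem_Ici, mem_Iic, mem_ofPred_eq] at ha hb ⊢
    · exact lt_abs.2 (Or.inl (by linarith))
    · exact lt_abs.2 (Or.inr (by linarith))
  calc ν (Ioi t) ≤ ν (Ioi t) * (ρ (Ici 0) + ρ (Iic 0)) := le_mul_of_one_le_right' hcover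
    _ = ν.prod ρ (Ioi t ×ˢ Ici 0) + ν.prod ρ (Iio (-t) ×ˢ Iic 0) := by
      rw [Measure.prod_prod, Measure.prod_prod, measure_Iio_neg_eq_of_map_neg_eq hν, mul_add]
    _ = ν.prod ρ (Ioi t ×ˢ Ici 0 ∪ Iio (-t) ×ˢ Iic 0) :=
      (measure_union hdisj (measurableSet_Iio.prod measurableSet_Iic)).symm
    _ ≤ ν.prod ρ {p | t < |p.1 + p.2|} := measure_mono hsub

lemma measure_Ioi_le_pi_lt_abs_sum [IsProbabilityMeasure ν] (hν : ν.map (fun e => -e) = ν)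
    {n : ℕ} (hn : n ≠ 0) {t : ℝ} (ht : 0 ≤ t) :
    ν (Ioi t) ≤ Measure.pi (fun _ : Fin n => ν) {f | t < |∑ i, f i|} := by
  obtain ⟨k, rfl⟩ := Nat.exists_eq_succ_of_ne_zero hn
  let ρ : Measure ℝ := (Measure.pi fun _ : Fin k => ν).map fun g => ∑ j, g j
  have : IsProbabilityMeasure ρ := Measure.isProbabilityMeasure_map (by fun_prop)
  have hsplit : MeasurePreserving (fun f : Fin (k + 1) → ℝ => (f 0, ∑ j : Fin k, f j.succ))
      (Measure.pi fun _ => ν) (ν.prod ρ) :=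
    ((MeasurePreserving.id ν).prod (Measurable.measurePreserving (by fun_prop) _)).comp
      (measurePreserving_piFinSuccAbove (fun _ => ν) 0)
  have hmeas : MeasurableSet {p : ℝ × ℝ | t < |p.1 + p.2|} :=
    measurableSet_lt measurable_const (by fun_prop)
  have key := measure_Ioi_le_prod_lt_abs_add hν ρ ht
  rw [← hsplit.measure_preimage hmeas.nullMeasurableSet] at key
  simp only [Fin.sum_univ_succ]
  exact key

lemma map_mul_eq_pi_of_indepFun {Ω ι : Type*} [MeasurableSpace Ω] {μ : Measure Ω}
    [IsProbabilityMeasure μ] [Fintype ι] [IsProbabilityMeasure ν] (hν : ν.map (fun e => -e) = ν)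
    {S E : Ω → ι → ℝ} (hS : Measurable S) (hE : Measurable E) (hSE : IndepFun S E μ)
    (hsign : ∀ ω i, S ω i = 1 ∨ S ω i = -1) (hlaw : μ.map E = Measure.pi fun _ => ν) :
    μ.map (fun ω i => S ω i * E ω i) = Measure.pi fun _ => ν := by
  have hmul : Measurable fun p : (ι → ℝ) × (ι → ℝ) => fun i => p.1 i * p.2 i := by fun_prop
  have hsign' : ∀ᵐ s ∂μ.map S, ∀ i, s i = 1 ∨ s i = -1 :=
    (ae_map_iff hS.aemeasurable (by measurability)).2 (ae_of_all _ (hsign ·))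
  have hflip : ∀ s : ι → ℝ, (∀ i, s i = 1 ∨ s i = -1) →
      (Measure.pi fun _ => ν).map (fun e i => s i * e i) = Measure.pi fun _ => ν := by
    intro s hs
    rw [Measure.pi_map_pi (fun i => (measurable_const_mul (s i)).aemeasurable)]
    simp only [map_const_mul_eq_of_map_neg_eq hν (hs _)]
  have hjoint : μ.map (fun ω => (S ω, E ω)) = (μ.map S).prod (Measure.pi fun _ => ν) := by
    rw [← hlaw]
    exact (indepFun_iff_map_prod_eq_prod_map_map hS.aemeasurable hE.aemeasurable).1 hSE
  ext B hB
  rw [← Function.comp_def (fun p : (ι → ℝ) × (ι → ℝ) => fun i => p.1 i * p.2 i)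
    (fun ω => (S ω, E ω)), ← Measure.map_map hmul (hS.prodMk hE), hjoint,
    Measure.map_apply hmul hB, Measure.prod_apply (hmul hB)]
  calc ∫⁻ s, (Measure.pi fun _ => ν) (Prod.mk s ⁻¹' (_ ⁻¹' B)) ∂μ.map S
      = ∫⁻ _, (Measure.pi fun _ => ν) B ∂μ.map S := by
        refine lintegral_congr_ae (hsign'.mono fun s hs => ?_)
        change (Measure.pi fun _ => ν) ((fun e i => s i * e i) ⁻¹' B) = _
        rw [← Measure.map_apply (by fun_prop) hB, hflip s hs]
    _ = (Measure.pi fun _ => ν) B := by simp [Measure.map_apply hS MeasurableSet.univ]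

end Symmetric

lemma map_restrict_eq_pi_of_iIndepFun {Ω : Type*} [MeasurableSpace Ω] {μ : Measure Ω}
    {ε : ℕ → Ω → ℝ} {ν : Measure ℝ} (hε : ∀ i, Measurable (ε i)) (hiid : iIndepFun ε μ)
    (hlaw : ∀ i, μ.map (ε i) = ν) (n : ℕ) :
    μ.map (fun ω (i : Fin n) => ε i ω) = Measure.pi fun _ => ν := by
  rw [iIndepFun.map_fun_eq_pi_map (fun i : Fin n => (hε i).aemeasurable)
    (hiid.precomp Fin.val_injective)]
  simp only [hlaw]

theorem projected_least_squares_polynomial_tail_general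
    {Ω : Type*} [MeasurableSpace Ω] (μ : Measure Ω) [IsProbabilityMeasure μ]
    (x ε y : ℕ → Ω → ℝ)
    (hxm : ∀ i, Measurable (x i)) (hεm : ∀ i, Measurable (ε i))
    (hxpm : ∀ i ω, x i ω = 1 ∨ x i ω = -1)
    (ν : Measure ℝ) [IsProbabilityMeasure ν]
    (hiid : iIndepFun ε μ)
    (hlaw : ∀ i, Measure.map (ε i) μ = ν)
    (hsymm : Measure.map (fun e => -e) ν = ν)
    (hindep : IndepFun (fun ω (i : ℕ) => x i ω) (fun ω (i : ℕ) => ε i ω) μ)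
    (C α : ℝ)
    (htail : ∀ t : ℝ, 0 < t → (ν (Set.Ioi t)).toReal > C * (t + 1) ^ (-α))
    -- the model: `yᵢ = xᵢ·θ* + εᵢ` with true coefficient `θ* = 0`
    (hy : ∀ i ω, y i ω = x i ω * 0 + ε i ω)
    (n : ℕ) (hn : 1 < n)
    -- the least-squares estimator projected onto `[−1,1]`
    (θLS : Ω → ℝ)
    (hθLS : ∀ ω, θLS ω = max (-1) (min 1
      ((∑ i ∈ Finset.range n, x i ω * y i ω) / (∑ i ∈ Finset.range n, (x i ω) ^ 2))))
    (δ : ℝ) (hδ : δ ∈ Set.Ioo (0 : ℝ) 1) :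
    (μ {ω | (θLS ω) ^ 2 > δ}).toReal > C * ((n : ℝ) * Real.sqrt δ + 1) ^ (-α) := by
  obtain ⟨hδ0, hδ1⟩ := hδ
  have hn0 : (0 : ℝ) < n := by exact_mod_cast Nat.zero_lt_of_lt hn
  set t : ℝ := n * √δ
  have ht : 0 < t := by positivity
  set Z : Ω → Fin n → ℝ := fun ω i => x i ω * ε i ω
  have hevent : {ω | θLS ω ^ 2 > δ} = Z ⁻¹' {f | t < |∑ i, f i|} := by
    ext ω
    have hsq : ∀ i, x i ω ^ 2 = 1 := fun i => by rcases hxpm i ω with h | h <;> simp [h]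
    have hnum : ∑ i ∈ Finset.range n, x i ω * y i ω = ∑ i : Fin n, Z ω i := by
      simp only [Z, hy, mul_zero, zero_add, Fin.sum_univ_eq_sum_range (fun i => x i ω * ε i ω)]
    simp only [mem_ofPred_eq, mem_preimage, gt_iff_lt, hθLS, hsq, hnum, Finset.sum_const,
      Finset.card_range, nsmul_eq_mul, mul_one, sq_max_neg_one_min_one, lt_min_iff, hδ1, true_and,
      lt_sq_div_iff_mul_sqrt_lt_abs hδ0.le hn0, t]
  have hlawZ : μ.map Z = Measure.pi fun _ => ν := by
    have hrestrict : Measurable fun (f : ℕ → ℝ) (i : Fin n) => f i := by fun_prop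
    exact map_mul_eq_pi_of_indepFun hsymm (by fun_prop) (by fun_prop)
      (hindep.comp hrestrict hrestrict) (fun ω i => hxpm i ω)
      (map_restrict_eq_pi_of_iIndepFun hεm hiid hlaw n)
  have hsum : MeasurableSet {f : Fin n → ℝ | t < |∑ i, f i|} :=
    measurableSet_lt measurable_const (by fun_prop)
  rw [hevent, ← Measure.map_apply (by fun_prop) hsum, hlawZ]
  calc C * (t + 1) ^ (-α) < (ν (Ioi t)).toReal := htail t ht
    _ ≤ _ := ENNReal.toReal_mono (measure_ne_top _ _)
      (measure_Ioi_le_pi_lt_abs_sum hsymm (by omega) ht.le)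

/-- **Polynomial excess-risk tail of projected least squares (Theorem 4, first part).**
In the model `yᵢ = xᵢθ* + εᵢ` with `θ* = 0`, `xᵢ ∈ {−1,1}`, i.i.d. noises `εᵢ` independent
of the `xᵢ`, zero mean, symmetric, and `P(εᵢ > t) > C(t+1)^{−α}` for all `t > 0`, the
projected least-squares estimator `θ_n^LS = proj_{[−1,1]}((Σxᵢyᵢ)/(Σxᵢ²))` satisfies, for
every `δ ∈ (0,1)` and `n > 1`, `P((θ_n^LS)² > δ) > C(n√δ + 1)^{−α}`. -/
theorem projected_least_squares_polynomial_tail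
    {Ω : Type*} [MeasurableSpace Ω] (μ : Measure Ω) [IsProbabilityMeasure μ]
    (x ε y : ℕ → Ω → ℝ)
    (hxm : ∀ i, Measurable (x i)) (hεm : ∀ i, Measurable (ε i))
    (hxpm : ∀ i ω, x i ω = 1 ∨ x i ω = -1)
    (ν : Measure ℝ) [IsProbabilityMeasure ν]
    (hiid : iIndepFun ε μ)
    (hlaw : ∀ i, Measure.map (ε i) μ = ν)
    (hint : Integrable (fun e => e) ν)
    (hmean : ∫ e, e ∂ν = 0)
    (hsymm : Measure.map (fun e => -e) ν = ν)
    (hindep : IndepFun (fun ω (i : ℕ) => x i ω) (fun ω (i : ℕ) => ε i ω) μ)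
    (C α : ℝ) (hC : 0 < C) (hα : 0 < α)
    (htail : ∀ t : ℝ, 0 < t → (ν (Set.Ioi t)).toReal > C * (t + 1) ^ (-α))
    -- the model: `yᵢ = xᵢ·θ* + εᵢ` with true coefficient `θ* = 0`
    (hy : ∀ i ω, y i ω = x i ω * 0 + ε i ω)
    (n : ℕ) (hn : 1 < n)
    -- the least-squares estimator projected onto `[−1,1]`
    (θLS : Ω → ℝ)
    (hθLS : ∀ ω, θLS ω = max (-1) (min 1
      ((∑ i ∈ Finset.range n, x i ω * y i ω) / (∑ i ∈ Finset.range n, (x i ω) ^ 2))))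
    (δ : ℝ) (hδ : δ ∈ Set.Ioo (0 : ℝ) 1) :
    (μ {ω | (θLS ω) ^ 2 > δ}).toReal > C * ((n : ℝ) * Real.sqrt δ + 1) ^ (-α) :=
  projected_least_squares_polynomial_tail_general μ x ε y hxm hεm hxpm ν hiid hlaw hsymm hindep C α
    htail hy n hn θLS hθLS δ hδ
end

section
/- Consider the linear regression model y_i = x_i·θ* + ε_i with θ* = 0, where x_i ∈ {−1,1}, the noises ε_1,...,ε_k are i.i.d., independent of the x_i, with zero mean, symmetric about 0, finite second moment σ² = E[ε_i²] and finite fourth moment μ_4 = E[ε_i⁴]. Then for every t > 0, the empirical process tail satisfies T_k(t) := P( sup_{θ∈[−1,1]} |(1/k)Σ_{i=1}^k (x_iθ − y_i)² − E[(xθ − y)²]| > t ) ≤ 8μ_4/(k t²) + 32σ²/(k t²). -/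
/-! Since `xᵢ² = 1`, the centred empirical risk at `θ` equals `Aₖ - 2θBₖ`, where `Aₖ` is the
sample mean of `εᵢ² - σ²` and `Bₖ` that of `xᵢεᵢ`. Its supremum over `[-1, 1]` is therefore at
most `|Aₖ| + 2|Bₖ|`, so the event forces `|Aₖ| ≥ t/2` or `|Bₖ| ≥ t/4`. Both are sample means of
pairwise uncorrelated variables (the `xᵢεᵢ` are uncorrelated because `x` is independent of the
independent centred noises), with variances at most `μ₄` and `σ²`, and Chebyshev's inequality
bounds the two probabilities by `4μ₄/(kt²)` and `16σ²/(kt²)`. -/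

set_option autoImplicit false

open MeasureTheory ProbabilityTheory

section SampleMean

variable {Ω : Type*} [MeasurableSpace Ω] {μ : Measure Ω}

theorem variance_sum_range_le_of_pairwise_covariance_eq_zero [IsFiniteMeasure μ]
    {Y : ℕ → Ω → ℝ} (k : ℕ) (hY : ∀ i, MemLp (Y i) 2 μ)
    (hcov : Pairwise fun i j => cov[Y i, Y j; μ] = 0) {v : ℝ} (hv : ∀ i, Var[Y i; μ] ≤ v) :
    Var[fun ω => ∑ i ∈ Finset.range k, Y i ω; μ] ≤ k * v := by
  rw [variance_fun_sum' fun i _ => hY i]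
  calc ∑ i ∈ Finset.range k, ∑ j ∈ Finset.range k, cov[Y i, Y j; μ]
      = ∑ i ∈ Finset.range k, Var[Y i; μ] := by
        refine Finset.sum_congr rfl fun i hi => ?_
        rw [Finset.sum_eq_single i (fun j _ hji => hcov hji.symm) (absurd hi), covariance_self
          (hY i).aemeasurable]
    _ ≤ k * v := by
        simpa using Finset.sum_le_sum fun i (_ : i ∈ Finset.range k) => hv i

theorem measureReal_le_abs_sampleMean_sub_le [IsFiniteMeasure μ] {Y : ℕ → Ω → ℝ} {k : ℕ}
    (hk : 0 < k) (hY : ∀ i, MemLp (Y i) 2 μ) (hcov : Pairwise fun i j => cov[Y i, Y j; μ] = 0)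
    {m v : ℝ} (hm : ∀ i, μ[Y i] = m) (hv : ∀ i, Var[Y i; μ] ≤ v) {c : ℝ} (hc : 0 < c) :
    μ.real {ω | c ≤ |(k : ℝ)⁻¹ * ∑ i ∈ Finset.range k, Y i ω - m|} ≤ v / (k * c ^ 2) := by
  set S : Ω → ℝ := fun ω => (k : ℝ)⁻¹ * ∑ i ∈ Finset.range k, Y i ω
  have hS : MemLp S 2 μ := by
    simpa [S, Finset.sum_apply] using (memLp_finsetSum' _ fun i _ => hY i).const_mul (k : ℝ)⁻¹
  have hmean : μ[S] = m := by
    simp only [S, integral_const_mul,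
      integral_finsetSum _ fun i _ => (hY i).integrable one_le_two, hm]
    field_simp
    simp
  have hvar : Var[S; μ] ≤ v / k := by
    calc Var[S; μ] = (k : ℝ)⁻¹ ^ 2 * Var[fun ω => ∑ i ∈ Finset.range k, Y i ω; μ] :=
          variance_const_mul _ _ _
      _ ≤ (k : ℝ)⁻¹ ^ 2 * (k * v) := by
          gcongr
          exact variance_sum_range_le_of_pairwise_covariance_eq_zero k hY hcov hv
      _ = v / k := by field_simp
  calc μ.real {ω | c ≤ |S ω - m|}
      ≤ Var[S; μ] / c ^ 2 := by
        rw [← hmean, measureReal_def,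
          ← ENNReal.toReal_ofReal (div_nonneg (variance_nonneg S μ) (sq_nonneg c))]
        exact ENNReal.toReal_mono ENNReal.ofReal_ne_top (meas_ge_le_variance_div_sq hS hc)
    _ ≤ v / k / c ^ 2 := by gcongr
    _ = v / (k * c ^ 2) := by rw [div_div]

end SampleMean

theorem inv_mul_sum_range_sq_sub_eq {x e : ℕ → ℝ} {k : ℕ} (hk : k ≠ 0)
    (hx : ∀ i, x i ^ 2 = 1) (θ c : ℝ) :
    (k : ℝ)⁻¹ * ∑ i ∈ Finset.range k, (x i * θ - e i) ^ 2 - (θ ^ 2 + c) =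
      ((k : ℝ)⁻¹ * ∑ i ∈ Finset.range k, e i ^ 2 - c) -
        2 * θ * ((k : ℝ)⁻¹ * ∑ i ∈ Finset.range k, x i * e i) := by
  have hterm : ∀ i, (x i * θ - e i) ^ 2 = θ ^ 2 + e i ^ 2 - 2 * θ * (x i * e i) := fun i => by
    linear_combination θ ^ 2 * hx i
  simp only [hterm, Finset.sum_sub_distrib, Finset.sum_add_distrib, Finset.sum_const,
    Finset.card_range, nsmul_eq_mul, ← Finset.mul_sum]
  field_simp
  ring

theorem ciSup_Icc_abs_sub_two_mul_le (a b : ℝ) :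
    ⨆ θ : Set.Icc (-1 : ℝ) 1, |a - 2 * θ * b| ≤ |a| + 2 * |b| := by
  have : Nonempty (Set.Icc (-1 : ℝ) 1) := ⟨⟨0, by norm_num⟩⟩
  refine ciSup_le fun θ => ?_
  have hθ : |(θ : ℝ)| ≤ 1 := abs_le.mpr θ.2
  calc |a - 2 * θ * b| ≤ |a| + 2 * |(θ : ℝ)| * |b| := by
        simpa [abs_mul] using abs_sub a (2 * θ * b)
    _ ≤ |a| + 2 * |b| := by nlinarith [abs_nonneg b]

section Noise

variable {Ω : Type*} [MeasurableSpace Ω] {μ : Measure Ω}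

theorem memLp_mul_of_abs_le_one {X E : Ω → ℝ} (hXm : AEStronglyMeasurable X μ)
    (hX : ∀ ω, |X ω| ≤ 1) (hE : MemLp E 2 μ) : MemLp (fun ω => X ω * E ω) 2 μ :=
  hE.of_le (hXm.mul hE.1) (ae_of_all _ fun ω => by
    simpa [abs_mul] using mul_le_of_le_one_left (abs_nonneg (E ω)) (hX ω))

theorem integral_mul_eq_zero_of_indepFun {X E : Ω → ℝ} (h : IndepFun X E μ)
    (hX : AEStronglyMeasurable X μ) (hE : AEStronglyMeasurable E μ) (hE0 : μ[E] = 0) :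
    μ[fun ω => X ω * E ω] = 0 := by
  rw [h.integral_fun_mul_eq_mul_integral hX hE, hE0, mul_zero]

variable [IsProbabilityMeasure μ]

theorem variance_mul_le_of_abs_le_one {X E : Ω → ℝ} (hXm : AEStronglyMeasurable X μ)
    (hX : ∀ ω, |X ω| ≤ 1) (hE : MemLp E 2 μ) :
    Var[fun ω => X ω * E ω; μ] ≤ μ[fun ω => E ω ^ 2] := by
  refine (variance_le_expectation_sq (hXm.mul hE.1)).trans (integral_mono_of_nonneg
    (ae_of_all _ fun ω => sq_nonneg _) ((memLp_two_iff_integrable_sq hE.1).mp hE)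
    (ae_of_all _ fun ω => ?_))
  simp only [Pi.pow_apply, Pi.mul_apply, mul_pow]
  nlinarith [sq_le_one_iff_abs_le_one (X ω) |>.mpr (hX ω), sq_nonneg (E ω)]

variable {x ε : ℕ → Ω → ℝ}

theorem covariance_mul_eq_zero_of_indepFun (hxm : ∀ i, Measurable (x i))
    (hεm : ∀ i, Measurable (ε i)) (hx : ∀ i ω, |x i ω| ≤ 1) (hε : ∀ i, MemLp (ε i) 2 μ)
    (hmean : ∀ i, μ[ε i] = 0) (hiid : Pairwise fun i j => IndepFun (ε i) (ε j) μ)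
    (hindep : IndepFun (fun ω i => x i ω) (fun ω i => ε i ω) μ) :
    Pairwise fun i j => cov[fun ω => x i ω * ε i ω, fun ω => x j ω * ε j ω; μ] = 0 := by
  intro i j hij
  have hW : ∀ i, μ[fun ω => x i ω * ε i ω] = 0 := fun i =>
    integral_mul_eq_zero_of_indepFun (hindep.comp (measurable_pi_apply i) (measurable_pi_apply i))
      (hxm i).aestronglyMeasurable (hεm i).aestronglyMeasurable (hmean i)
  have hεε : μ[fun ω => ε i ω * ε j ω] = 0 :=
    integral_mul_eq_zero_of_indepFun (hiid hij) (hεm i).aestronglyMeasurable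
      (hεm j).aestronglyMeasurable (hmean j)
  have hsplit : IndepFun (fun ω => x i ω * x j ω) (fun ω => ε i ω * ε j ω) μ :=
    hindep.comp ((measurable_pi_apply i).mul (measurable_pi_apply j))
      ((measurable_pi_apply i).mul (measurable_pi_apply j))
  rw [covariance_eq_sub (memLp_mul_of_abs_le_one (hxm i).aestronglyMeasurable (hx i) (hε i))
    (memLp_mul_of_abs_le_one (hxm j).aestronglyMeasurable (hx j) (hε j)), hW i, hW j, mul_zero,
    sub_zero]
  calc μ[(fun ω => x i ω * ε i ω) * fun ω => x j ω * ε j ω]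
      = ∫ ω, (x i ω * x j ω) * (ε i ω * ε j ω) ∂μ := by
        congr 1; ext ω; simp only [Pi.mul_apply]; ring
    _ = 0 := by
        rw [hsplit.integral_fun_mul_eq_mul_integral ((hxm i).mul (hxm j)).aestronglyMeasurable
          ((hεm i).mul (hεm j)).aestronglyMeasurable, hεε, mul_zero]

variable {ν : Measure ℝ} {k : ℕ} {c : ℝ}

theorem measureReal_le_abs_sampleMean_sq_sub_le [IsProbabilityMeasure ν]
    (hεm : ∀ i, Measurable (ε i))
    (hiid : iIndepFun ε μ) (hlaw : ∀ i, μ.map (ε i) = ν) (hint4 : Integrable (fun e => e ^ 4) ν)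
    (hk : 0 < k) (hc : 0 < c) :
    μ.real {ω | c ≤ |(k : ℝ)⁻¹ * ∑ i ∈ Finset.range k, ε i ω ^ 2 - ∫ e, e ^ 2 ∂ν|} ≤
      (∫ e, e ^ 4 ∂ν) / (k * c ^ 2) := by
  have hsq : ∀ i, IdentDistrib (fun ω => ε i ω ^ 2) (fun e : ℝ => e ^ 2) μ ν := fun i =>
    IdentDistrib.comp (g := id) ⟨(hεm i).aemeasurable, aemeasurable_id, by
      rw [hlaw i, Measure.map_id]⟩ (measurable_id.pow_const 2)
  have hsqm : AEStronglyMeasurable (fun e : ℝ => e ^ 2) ν :=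
    (measurable_id.pow_const 2).aestronglyMeasurable
  have hL2 : MemLp (fun e : ℝ => e ^ 2) 2 ν :=
    (memLp_two_iff_integrable_sq hsqm).mpr (by simpa [← pow_mul] using hint4)
  refine measureReal_le_abs_sampleMean_sub_le hk (fun i => (hsq i).memLp_iff.mpr hL2)
    (fun i j hij => ((hiid.indepFun hij).comp (measurable_id.pow_const 2)
      (measurable_id.pow_const 2)).covariance_eq_zero ((hsq i).memLp_iff.mpr hL2)
      ((hsq j).memLp_iff.mpr hL2)) (fun i => (hsq i).integral_eq) (fun i => ?_) hc
  rw [(hsq i).variance_eq]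
  simpa [← pow_mul] using variance_le_expectation_sq hsqm

theorem measureReal_le_abs_sampleMean_mul_le (hxm : ∀ i, Measurable (x i))
    (hεm : ∀ i, Measurable (ε i)) (hx : ∀ i ω, |x i ω| ≤ 1) (hiid : iIndepFun ε μ)
    (hlaw : ∀ i, μ.map (ε i) = ν) (hmean : ∫ e, e ∂ν = 0)
    (hint2 : Integrable (fun e => e ^ 2) ν)
    (hindep : IndepFun (fun ω i => x i ω) (fun ω i => ε i ω) μ) (hk : 0 < k) (hc : 0 < c) :
    μ.real {ω | c ≤ |(k : ℝ)⁻¹ * ∑ i ∈ Finset.range k, x i ω * ε i ω|} ≤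
      (∫ e, e ^ 2 ∂ν) / (k * c ^ 2) := by
  have hd : ∀ i, IdentDistrib (ε i) id μ ν := fun i =>
    ⟨(hεm i).aemeasurable, aemeasurable_id, by rw [hlaw i, Measure.map_id]⟩
  have hε : ∀ i, MemLp (ε i) 2 μ := fun i =>
    (hd i).memLp_iff.mpr ((memLp_two_iff_integrable_sq aestronglyMeasurable_id).mpr hint2)
  have hε0 : ∀ i, μ[ε i] = 0 := fun i => (hd i).integral_eq.trans hmean
  simpa using measureReal_le_abs_sampleMean_sub_le hk
    (fun i => memLp_mul_of_abs_le_one (hxm i).aestronglyMeasurable (hx i) (hε i))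
    (covariance_mul_eq_zero_of_indepFun hxm hεm hx hε hε0 (fun i j => hiid.indepFun) hindep)
    (fun i => integral_mul_eq_zero_of_indepFun
      (hindep.comp (measurable_pi_apply i) (measurable_pi_apply i))
      (hxm i).aestronglyMeasurable (hεm i).aestronglyMeasurable (hε0 i))
    (fun i => (variance_mul_le_of_abs_le_one (hxm i).aestronglyMeasurable (hx i) (hε i)).trans_eq
      ((hd i).comp (measurable_id.pow_const 2)).integral_eq) hc

end Noise

theorem regression_empirical_process_tail_general
    {Ω : Type*} [MeasurableSpace Ω] (μ : Measure Ω) [IsProbabilityMeasure μ]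
    (x ε y : ℕ → Ω → ℝ)
    (hxm : ∀ i, Measurable (x i)) (hεm : ∀ i, Measurable (ε i))
    (hxpm : ∀ i ω, x i ω = 1 ∨ x i ω = -1)
    (ν : Measure ℝ) [IsProbabilityMeasure ν]
    (hiid : iIndepFun ε μ)
    (hlaw : ∀ i, Measure.map (ε i) μ = ν)
    (hmean : ∫ e, e ∂ν = 0)
    (hindep : IndepFun (fun ω (i : ℕ) => x i ω) (fun ω (i : ℕ) => ε i ω) μ)
    -- finite second and fourth moments
    (σ2 μ4 : ℝ)
    (hint2 : Integrable (fun e => e ^ 2) ν) (hσ2 : σ2 = ∫ e, e ^ 2 ∂ν)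
    (hint4 : Integrable (fun e => e ^ 4) ν) (hμ4 : μ4 = ∫ e, e ^ 4 ∂ν)
    -- the model: `yᵢ = xᵢ·θ* + εᵢ` with true coefficient `θ* = 0`
    (hy : ∀ i ω, y i ω = x i ω * 0 + ε i ω)
    (k : ℕ) (hk : 0 < k)
    (t : ℝ) (ht : 0 < t) :
    (μ {ω | (⨆ θ : Set.Icc (-1 : ℝ) 1,
        |(k : ℝ)⁻¹ * ∑ i ∈ Finset.range k, (x i ω * (θ : ℝ) - y i ω) ^ 2 -
          ((θ : ℝ) ^ 2 + σ2)|) > t}).toReal ≤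
      8 * μ4 / (k * t ^ 2) + 32 * σ2 / (k * t ^ 2) := by
  have hx2 : ∀ i ω, x i ω ^ 2 = 1 := fun i ω => by rcases hxpm i ω with h | h <;> simp [h]
  have hx : ∀ i ω, |x i ω| ≤ 1 := fun i ω => (sq_le_one_iff_abs_le_one _).mp (hx2 i ω).le
  have hsub : {ω | (⨆ θ : Set.Icc (-1 : ℝ) 1,
      |(k : ℝ)⁻¹ * ∑ i ∈ Finset.range k, (x i ω * (θ : ℝ) - y i ω) ^ 2 -
        ((θ : ℝ) ^ 2 + σ2)|) > t} ⊆
      {ω | t / 2 ≤ |(k : ℝ)⁻¹ * ∑ i ∈ Finset.range k, ε i ω ^ 2 - σ2|} ∪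
        {ω | t / 4 ≤ |(k : ℝ)⁻¹ * ∑ i ∈ Finset.range k, x i ω * ε i ω|} := by
    intro ω hω
    simp only [Set.mem_ofPred_eq, hy, mul_zero, zero_add,
      inv_mul_sum_range_sq_sub_eq hk.ne' (hx2 · ω)] at hω
    have := hω.trans_le (ciSup_Icc_abs_sub_two_mul_le _ _)
    by_contra! h
    simp only [Set.mem_union, Set.mem_ofPred_eq, not_or, not_le] at h
    linarith
  have hσ2_nonneg : 0 ≤ σ2 := hσ2 ▸ integral_nonneg fun e => sq_nonneg e
  have hμ4_nonneg : 0 ≤ μ4 := hμ4 ▸ integral_nonneg fun e => by positivity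
  calc μ.real _ ≤ μ4 / (k * (t / 2) ^ 2) + σ2 / (k * (t / 4) ^ 2) := by
        refine (measureReal_mono hsub).trans ((measureReal_union_le _ _).trans (add_le_add ?_ ?_))
        · simpa only [hσ2, hμ4] using
            measureReal_le_abs_sampleMean_sq_sub_le hεm hiid hlaw hint4 hk (half_pos ht)
        · simpa only [hσ2] using measureReal_le_abs_sampleMean_mul_le hxm hεm hx hiid hlaw hmean
            hint2 hindep hk (by positivity)
    _ = 4 * μ4 / (k * t ^ 2) + 16 * σ2 / (k * t ^ 2) := by field_simp; ring
    _ ≤ 8 * μ4 / (k * t ^ 2) + 32 * σ2 / (k * t ^ 2) := by gcongr <;> linarith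

/-- **Empirical process tail bound for the regression example (bound (31)-(32)).**
In the model `yᵢ = xᵢθ* + εᵢ` with `θ* = 0`, `xᵢ ∈ {−1,1}`, i.i.d. noises `εᵢ` independent
of the `xᵢ`, zero mean, symmetric, with `σ² = E[εᵢ²]` and `μ₄ = E[εᵢ⁴]` finite, the
empirical process tail satisfies, for every `t > 0` (noting `E[(xθ−y)²] = θ² + σ²`):
`T_k(t) = P(sup_{θ∈[−1,1]} |(1/k)Σᵢ(xᵢθ−yᵢ)² − (θ²+σ²)| > t) ≤ 8μ₄/(kt²) + 32σ²/(kt²)`. -/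
theorem regression_empirical_process_tail
    {Ω : Type*} [MeasurableSpace Ω] (μ : Measure Ω) [IsProbabilityMeasure μ]
    (x ε y : ℕ → Ω → ℝ)
    (hxm : ∀ i, Measurable (x i)) (hεm : ∀ i, Measurable (ε i))
    (hxpm : ∀ i ω, x i ω = 1 ∨ x i ω = -1)
    (ν : Measure ℝ) [IsProbabilityMeasure ν]
    (hiid : iIndepFun ε μ)
    (hlaw : ∀ i, Measure.map (ε i) μ = ν)
    (hmean : ∫ e, e ∂ν = 0)
    (hsymm : Measure.map (fun e => -e) ν = ν)
    (hindep : IndepFun (fun ω (i : ℕ) => x i ω) (fun ω (i : ℕ) => ε i ω) μ)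
    -- finite second and fourth moments
    (σ2 μ4 : ℝ)
    (hint2 : Integrable (fun e => e ^ 2) ν) (hσ2 : σ2 = ∫ e, e ^ 2 ∂ν)
    (hint4 : Integrable (fun e => e ^ 4) ν) (hμ4 : μ4 = ∫ e, e ^ 4 ∂ν)
    -- the model: `yᵢ = xᵢ·θ* + εᵢ` with true coefficient `θ* = 0`
    (hy : ∀ i ω, y i ω = x i ω * 0 + ε i ω)
    (k : ℕ) (hk : 0 < k)
    (t : ℝ) (ht : 0 < t) :
    (μ {ω | (⨆ θ : Set.Icc (-1 : ℝ) 1,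
        |(k : ℝ)⁻¹ * ∑ i ∈ Finset.range k, (x i ω * (θ : ℝ) - y i ω) ^ 2 -
          ((θ : ℝ) ^ 2 + σ2)|) > t}).toReal ≤
      8 * μ4 / (k * t ^ 2) + 32 * σ2 / (k * t ^ 2) :=
  regression_empirical_process_tail_general μ x ε y hxm hεm hxpm ν hiid hlaw hmean hindep σ2 μ4
    hint2 hσ2 hint4 hμ4 hy k hk t ht
end

section
/- Let e denote Euler's number. For every p ∈ (0,1), the Bernoulli KL divergence satisfies both D_KL((1−p)/e ‖ 1−p) ≥ (1 − 2/e)·(1−p) and D_KL((1−p)/e ‖ 1−p) ≥ (1 − 1/e)·ln((e−1)/(e²·p)). -/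
set_option autoImplicit false

lemma log_ge_one_sub_inv {x : ℝ} (hx : 0 < x) : Real.log x ≥ 1 - 1/x := by
  have h := Real.log_le_sub_one_of_pos (x := 1/x) (by positivity)
  rw [Real.log_div one_ne_zero hx.ne'] at h
  rw [Real.log_one] at h
  linarith

/-- **Two lower bounds on `D_KL((1−p)/e ‖ 1−p)` (from the proof of Lemma 7).**
For every `p ∈ (0,1)`, `D_KL((1−p)/e ‖ 1−p) ≥ (1 − 2/e)(1−p)` and
`D_KL((1−p)/e ‖ 1−p) ≥ (1 − 1/e)·ln((e−1)/(e²p))`, where `e` is Euler's number. -/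
theorem klBer_retrieval_lower_bounds (p : ℝ) (hp : p ∈ Set.Ioo (0 : ℝ) 1) :
    klBer ((1 - p) / Real.exp 1) (1 - p) ≥ (1 - 2 / Real.exp 1) * (1 - p) ∧
    klBer ((1 - p) / Real.exp 1) (1 - p) ≥
      (1 - 1 / Real.exp 1) * Real.log ((Real.exp 1 - 1) / (Real.exp 1 ^ 2 * p)) := by
  obtain ⟨hp0, hp1⟩ := hp
  set e := Real.exp 1 with he
  have he1 : 2 < e := by
    have := Real.exp_one_gt_d9; rw [he]; linarith
  have he0 : (0:ℝ) < e := by linarith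
  have hq0 : 0 < 1 - p := by linarith
  -- A := 1 - (1-p)/e
  set A : ℝ := 1 - (1 - p) / e with hA
  have hAe : A = (e - 1 + p) / e := by rw [hA]; field_simp; ring
  have hA0 : 0 < A := by
    rw [hAe]; exact div_pos (by linarith) he0
  have hAa : A ≥ 1 - 1/e := by
    rw [hA]
    have : (1 - p)/e ≤ 1/e := by gcongr; linarith
    linarith
  -- simplify the KL divergence
  have hkl : klBer ((1 - p) / e) (1 - p)
      = -((1 - p)/e) + A * Real.log (A / p) := by
    unfold klBer
    have h1 : (1 - p)/e / (1 - p) = 1/e := by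
      rw [div_right_comm, div_self hq0.ne']
    have h2 : Real.log ((1 - p)/e / (1 - p)) = -1 := by
      rw [h1, Real.log_div one_ne_zero he0.ne', Real.log_one, he, Real.log_exp]
      ring
    have h3 : (1:ℝ) - (1 - p) = p := by ring
    rw [h2, h3, hA]
    ring
  have hlogAp : Real.log (A / p) = Real.log A - Real.log p :=
    Real.log_div hA0.ne' hp0.ne'
  constructor
  · -- first bound
    have h := log_ge_one_sub_inv (x := A / p) (by positivity)
    have h' : A * Real.log (A / p) ≥ A - p := by
      have : A * (1 - 1/(A/p)) = A - p := by field_simp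
      nlinarith [mul_le_mul_of_nonneg_left h hA0.le]
    rw [hkl]
    have h'' : A - p = (1 - p) - (1 - p)/e := by rw [hA]; ring
    have h''' : (1 - 2/e)*(1 - p) = (1 - p) - 2*((1 - p)/e) := by ring
    linarith
  · -- second bound
    have hea : (0:ℝ) < 1 - 1/e := by
      have : 1/e < 1 := by rw [div_lt_one he0]; linarith
      linarith
    set a : ℝ := 1 - 1/e with ha
    -- rewrite the RHS log
    have hrhs : Real.log ((e - 1) / (e ^ 2 * p)) = Real.log a - 1 - Real.log p := by
      have h1 : (e - 1) / (e ^ 2 * p) = a / (e * p) := by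
        have hae : a = (e - 1)/e := by rw [ha]; field_simp
        rw [hae, div_div]; congr 1; ring
      rw [h1, Real.log_div hea.ne' (by positivity),
        Real.log_mul he0.ne' hp0.ne', he, Real.log_exp]
      ring
    -- key estimate : A log A - a log a ≥ (A - a) * (2 - 1/a) ≥ 0
    have hlogA : Real.log A = Real.log (A / a) + Real.log a := by
      rw [Real.log_div hA0.ne' hea.ne']; ring
    have h1 : Real.log (A / a) ≥ 1 - a / A := by
      have := log_ge_one_sub_inv (x := A / a) (by positivity)
      have : 1/(A/a) = a/A := by field_simp
      have := log_ge_one_sub_inv (x := A / a) (by positivity)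
      rw [‹1/(A/a) = a/A›] at this
      exact this
    have hloga : Real.log a ≥ 1 - 1/a := log_ge_one_sub_inv hea
    have hkey : A * Real.log A - a * Real.log a ≥ (A - a) * (2 - 1/a) := by
      have e1 : A * (1 - a/A) = A - a := by field_simp
      have e2 : A * Real.log (A/a) ≥ A - a := by
        nlinarith [mul_le_mul_of_nonneg_left h1 hA0.le]
      have e3 : (A - a) * Real.log a ≥ (A - a) * (1 - 1/a) := by
        have hAsub : 0 ≤ A - a := by linarith
        exact mul_le_mul_of_nonneg_left hloga hAsub
      calc A * Real.log A - a * Real.log a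
          = A * Real.log (A/a) + (A - a) * Real.log a := by rw [hlogA]; ring
        _ ≥ (A - a) + (A - a) * (1 - 1/a) := by linarith
        _ = (A - a) * (2 - 1/a) := by ring
    have ha2 : 2 - 1/a ≥ 0 := by
      rw [ha]
      have h1e : 1/e < 1/2 := by
        rw [div_lt_div_iff₀ he0 (by norm_num)]; linarith
      have : (0:ℝ) < 1 - 1/e := hea
      rw [ge_iff_le, sub_nonneg, div_le_iff₀ this]
      linarith
    have hAsub : A - a = p/e := by rw [hA, ha]; ring
    have hlogp : Real.log p ≤ 0 := Real.log_nonpos hp0.le hp1.le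
    have h2e : 1 - 2/e ≥ 0 := by
      rw [ge_iff_le, sub_nonneg, div_le_one he0]; linarith
    rw [hkl, hlogAp, hrhs]
    have hterm : (A - a) * (2 - 1/a) ≥ 0 := by
      apply mul_nonneg _ ha2
      rw [hAsub]; positivity
    have h4 : A * Real.log p - a * Real.log p = (p/e) * Real.log p := by
      rw [← sub_mul, hAsub]
    have h5 : (p/e) * (1 - Real.log p) ≥ 0 :=
      mul_nonneg (by positivity) (by linarith)
    have h6 : -((1 - p)/e) + a = (1 - 2/e) + p/e := by rw [ha]; field_simp; ring
    nlinarith [hkey, hterm, h4, h5, h6]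
end

section
/- Fix a finite set Θ and real numbers p̂(θ) ∈ [0,1] for θ ∈ Θ with maximizer θ_max (so p̂_max := p̂(θ_max) ≥ p̂(θ) for all θ). Let I_θ^b ∈ {0,1}, b = 1,...,B, be i.i.d. random indicator vectors (I_θ^b)_{θ∈Θ} with marginals E[I_θ^b] = p̂(θ), and set p̄(θ) := (1/B)Σ_{b=1}^B I_θ^b. Then for every θ ∈ Θ: P(p̄(θ) ≥ p̄(θ_max)) ≤ exp( −(B/6)·(p̂_max − p̂(θ))² / (min{p̂_max, 1−p̂_max} + p̂_max − p̂(θ)) ). -/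
set_option autoImplicit false

open MeasureTheory ProbabilityTheory Real

/-!
Put `Δ = p̂_max - p̂(θ)` and `m = min(p̂_max, 1 - p̂_max)`. The event is `{∑_b X_b ≥ 0}` for
the independent variables `X_b = 1{I_θ^b} - 1{I_θmax^b} ∈ {-1, 0, 1}`, which have mean `-Δ`
and second moment `v := P(I_θ^b ≠ I_θmax^b) ≤ 2m + Δ`. On `{-1, 0, 1}` one has
`exp (t x) ≤ 1 + t x + x² t²/(2(1 - t/3))`, so the Chernoff bound at `t = Δ/(v + Δ/3)` gives
Bernstein's inequality `exp(-B Δ²/(2(v + Δ/3)))`, and `2(2m + Δ + Δ/3) ≤ 6(m + Δ)`.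
-/

theorem exp_le_one_add_add_sq_div {t : ℝ} (h0 : 0 ≤ t) (h1 : t ≤ 1) :
    exp t ≤ 1 + t + t ^ 2 / (2 * (1 - t / 3)) := by
  have taylor : exp t ≤ 1 + t + t ^ 2 / 2 + t ^ 3 / 6 + t ^ 4 / 24 + t ^ 5 / 100 := by
    have h := Real.exp_bound' h0 h1 (n := 5) (by norm_num)
    norm_num [Finset.sum_range_succ, Nat.factorial] at h
    linarith
  have tail : t ^ 2 / 2 + t ^ 3 / 6 + t ^ 4 / 24 + t ^ 5 / 100 ≤ t ^ 2 / (2 * (1 - t / 3)) := by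
    rw [le_div_iff₀ (by linarith)]
    nlinarith [pow_nonneg h0 4, pow_nonneg h0 5, pow_nonneg h0 6]
  linarith

theorem exp_neg_le_one_sub_add_sq_div {t : ℝ} (h0 : 0 ≤ t) (h1 : t ≤ 1) :
    exp (-t) ≤ 1 - t + t ^ 2 / (2 * (1 - t / 3)) := by
  have hsinh : t ≤ sinh t := self_le_sinh_iff.2 h0
  rw [sinh_eq] at hsinh
  linarith [exp_le_one_add_add_sq_div h0 h1]

theorem mem_Icc_of_mem_neg_one_zero_one {x : ℝ} (hx : x ∈ ({-1, 0, 1} : Set ℝ)) :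
    x ∈ Set.Icc (-1) 1 := by
  rcases hx with rfl | rfl | rfl <;> norm_num

theorem exp_mul_le_of_mem_neg_one_zero_one {t x : ℝ} (h0 : 0 ≤ t) (h1 : t ≤ 1)
    (hx : x ∈ ({-1, 0, 1} : Set ℝ)) :
    exp (t * x) ≤ 1 + t * x + t ^ 2 / (2 * (1 - t / 3)) * x ^ 2 := by
  rcases hx with rfl | rfl | rfl
  · simpa [← sub_eq_add_neg] using exp_neg_le_one_sub_add_sq_div h0 h1
  · simp
  · simpa using exp_le_one_add_add_sq_div h0 h1

section Bernstein

variable {Ω : Type*} [MeasurableSpace Ω] {μ : Measure Ω} [IsProbabilityMeasure μ]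

theorem mgf_le_exp_of_mem_neg_one_zero_one {X : Ω → ℝ} (hXm : Measurable X)
    (hX : ∀ ω, X ω ∈ ({-1, 0, 1} : Set ℝ)) {t : ℝ} (h0 : 0 ≤ t) (h1 : t ≤ 1) :
    mgf X μ t ≤ exp (t * μ[X] + t ^ 2 / (2 * (1 - t / 3)) * μ[fun ω ↦ X ω ^ 2]) := by
  have hIcc : ∀ᵐ ω ∂μ, X ω ∈ Set.Icc (-1) 1 :=
    ae_of_all _ fun ω ↦ mem_Icc_of_mem_neg_one_zero_one (hX ω)
  have hXi : Integrable X μ := .of_mem_Icc (-1) 1 hXm.aemeasurable hIcc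
  have hX2i : Integrable (fun ω ↦ X ω ^ 2) μ :=
    .of_mem_Icc 0 1 (hXm.pow_const 2).aemeasurable (hIcc.mono fun ω hω ↦
      ⟨sq_nonneg _, by simpa using sq_le_one_iff_abs_le_one (X ω) |>.2 (abs_le.2 hω)⟩)
  calc mgf X μ t ≤ μ[fun ω ↦ 1 + t * X ω + t ^ 2 / (2 * (1 - t / 3)) * X ω ^ 2] := by
        refine integral_mono (integrable_exp_mul_of_mem_Icc hXm.aemeasurable hIcc)
          (((integrable_const 1).add (hXi.const_mul t)).add (hX2i.const_mul _))
          fun ω ↦ exp_mul_le_of_mem_neg_one_zero_one h0 h1 (hX ω)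
    _ = 1 + (t * μ[X] + t ^ 2 / (2 * (1 - t / 3)) * μ[fun ω ↦ X ω ^ 2]) := by
        have hlin : Integrable (fun ω ↦ 1 + t * X ω) μ :=
          (integrable_const 1).add (hXi.const_mul t)
        beta_reduce
        rw [integral_add hlin (hX2i.const_mul _),
          integral_add (integrable_const 1) (hXi.const_mul t), integral_const_mul,
          integral_const_mul, integral_const, probReal_univ, one_smul, add_assoc]
    _ ≤ _ := by rw [add_comm]; exact add_one_le_exp _

theorem measureReal_sum_nonneg_le_exp_of_mem_neg_one_zero_one {ι : Type*} [Fintype ι]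
    {X : ι → Ω → ℝ} (hindep : iIndepFun X μ) (hXm : ∀ i, Measurable (X i))
    (hX : ∀ i ω, X i ω ∈ ({-1, 0, 1} : Set ℝ)) {Δ v : ℝ} (hmean : ∀ i, μ[X i] ≤ -Δ)
    (hvar : ∀ i, μ[fun ω ↦ X i ω ^ 2] ≤ v) {t : ℝ} (h0 : 0 ≤ t) (h1 : t ≤ 1) :
    μ.real {ω | 0 ≤ ∑ i, X i ω} ≤
      exp (Fintype.card ι * (-(t * Δ) + t ^ 2 / (2 * (1 - t / 3)) * v)) := by
  have hG : 0 ≤ t ^ 2 / (2 * (1 - t / 3)) := div_nonneg (sq_nonneg t) (by linarith)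
  have hexp : ∀ i, Integrable (fun ω ↦ exp (t * X i ω)) μ := fun i ↦
    integrable_exp_mul_of_mem_Icc (hXm i).aemeasurable
      (ae_of_all _ fun ω ↦ mem_Icc_of_mem_neg_one_zero_one (hX i ω))
  calc μ.real {ω | 0 ≤ ∑ i, X i ω} = μ.real {ω | 0 ≤ (∑ i, X i) ω} := by
        simp only [Finset.sum_apply]
    _ ≤ exp (-t * 0) * mgf (∑ i, X i) μ t :=
        measure_ge_le_exp_mul_mgf 0 h0 (hindep.integrable_exp_mul_sum hXm fun i _ ↦ hexp i)
    _ = ∏ i, mgf (X i) μ t := by rw [hindep.mgf_sum hXm]; simp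
    _ ≤ ∏ _i : ι, exp (-(t * Δ) + t ^ 2 / (2 * (1 - t / 3)) * v) := by
        refine Finset.prod_le_prod (fun i _ ↦ mgf_nonneg) fun i _ ↦ ?_
        refine (mgf_le_exp_of_mem_neg_one_zero_one (hXm i) (hX i) h0 h1).trans (exp_le_exp.2 ?_)
        gcongr
        · nlinarith [hmean i]
        · exact hvar i
    _ = _ := by rw [Finset.prod_const, Finset.card_univ, ← exp_nat_mul]

theorem measureReal_sum_nonneg_le_bernstein {ι : Type*} [Fintype ι]
    {X : ι → Ω → ℝ} (hindep : iIndepFun X μ) (hXm : ∀ i, Measurable (X i))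
    (hX : ∀ i ω, X i ω ∈ ({-1, 0, 1} : Set ℝ)) {Δ v : ℝ} (hΔ : 0 ≤ Δ) (hΔv : Δ ≤ v)
    (hmean : ∀ i, μ[X i] ≤ -Δ) (hvar : ∀ i, μ[fun ω ↦ X i ω ^ 2] ≤ v) :
    μ.real {ω | 0 ≤ ∑ i, X i ω} ≤
      exp (-(Fintype.card ι * Δ ^ 2) / (2 * (v + Δ / 3))) := by
  rcases hΔ.eq_or_lt with rfl | hΔ
  · simp
  have hs : 0 < v + Δ / 3 := by linarith
  have hv : v ≠ 0 := by linarith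
  have ht : Δ / (v + Δ / 3) ≤ 1 := (div_le_one hs).2 (by linarith)
  refine (measureReal_sum_nonneg_le_exp_of_mem_neg_one_zero_one hindep hXm hX hmean hvar
    (div_nonneg hΔ.le hs.le) ht).trans_eq (congrArg exp ?_)
  have h13 : 1 - Δ / (v + Δ / 3) / 3 = v / (v + Δ / 3) := by
    rw [div_right_comm, one_sub_div hs.ne', add_sub_cancel_right]
  rw [h13]
  field_simp
  ring

end Bernstein

theorem indicator_one_sub_indicator_one_mem {Ω : Type*} {A C : Set Ω} (x : Ω) :
    A.indicator (1 : Ω → ℝ) x - C.indicator 1 x ∈ ({-1, 0, 1} : Set ℝ) := by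
  by_cases hA : x ∈ A <;> by_cases hC : x ∈ C <;> simp [hA, hC]

theorem indicator_one_sub_indicator_one_sq {Ω : Type*} {A C : Set Ω} (x : Ω) :
    (A.indicator (1 : Ω → ℝ) x - C.indicator 1 x) ^ 2 = (symmDiff A C).indicator 1 x := by
  by_cases hA : x ∈ A <;> by_cases hC : x ∈ C <;> simp [hA, hC, Set.mem_symmDiff]

section IndicatorDifference

variable {Ω : Type*} [MeasurableSpace Ω] {μ : Measure Ω} [IsProbabilityMeasure μ]
  {A C : Set Ω}

theorem integral_indicator_one_sub_indicator_one (hA : MeasurableSet A) (hC : MeasurableSet C) :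
    μ[fun x ↦ A.indicator (1 : Ω → ℝ) x - C.indicator 1 x] = μ.real A - μ.real C := by
  rw [integral_sub ((integrable_const 1).indicator hA) ((integrable_const 1).indicator hC),
    integral_indicator_one hA, integral_indicator_one hC]

theorem integral_indicator_one_sub_indicator_one_sq_le (hA : MeasurableSet A)
    (hC : MeasurableSet C) :
    μ[fun x ↦ (A.indicator (1 : Ω → ℝ) x - C.indicator 1 x) ^ 2] ≤
      min (μ.real A + μ.real C) (2 - μ.real A - μ.real C) := by
  simp_rw [indicator_one_sub_indicator_one_sq, integral_indicator_one (hA.symmDiff hC)]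
  refine le_min ((measureReal_mono Set.symmDiff_subset_union).trans (measureReal_union_le _ _)) ?_
  calc μ.real (symmDiff A C) = μ.real (symmDiff Aᶜ Cᶜ) := by rw [compl_symmDiff_compl]
    _ ≤ μ.real Aᶜ + μ.real Cᶜ :=
        (measureReal_mono Set.symmDiff_subset_union).trans (measureReal_union_le _ _)
    _ = 2 - μ.real A - μ.real C := by
        rw [probReal_compl_eq_one_sub hA, probReal_compl_eq_one_sub hC]; ring

end IndicatorDifference

theorem measureReal_sum_indicator_sub_indicator_nonneg_le {Ω ι : Type*} [MeasurableSpace Ω]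
    {μ : Measure Ω} [IsProbabilityMeasure μ] [Fintype ι] [Nonempty ι] {A C : ι → Set Ω}
    (hA : ∀ i, MeasurableSet (A i)) (hC : ∀ i, MeasurableSet (C i))
    (hindep : iIndepFun (fun i ω ↦ (A i).indicator (1 : Ω → ℝ) ω - (C i).indicator 1 ω) μ)
    {p q : ℝ} (hAq : ∀ i, μ.real (A i) = q) (hCp : ∀ i, μ.real (C i) = p) (hqp : q ≤ p) :
    μ.real {ω | 0 ≤ ∑ i, ((A i).indicator (1 : Ω → ℝ) ω - (C i).indicator 1 ω)} ≤
      exp (-(Fintype.card ι / 6) * (p - q) ^ 2 / (min p (1 - p) + (p - q))) := by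
  obtain ⟨i₀⟩ := ‹Nonempty ι›
  have hm : 0 ≤ min p (1 - p) :=
    le_min (hCp i₀ ▸ measureReal_nonneg) (by linarith [hCp i₀ ▸ measureReal_le_one (μ := μ)])
  have hmean : ∀ i,
      μ[fun ω ↦ (A i).indicator (1 : Ω → ℝ) ω - (C i).indicator 1 ω] ≤ -(p - q) := fun i ↦ by
    rw [integral_indicator_one_sub_indicator_one (hA i) (hC i), hAq, hCp]; linarith
  have hvar : ∀ i, μ[fun ω ↦ ((A i).indicator (1 : Ω → ℝ) ω - (C i).indicator 1 ω) ^ 2] ≤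
      2 * min p (1 - p) + (p - q) := fun i ↦ by
    refine (integral_indicator_one_sub_indicator_one_sq_le (hA i) (hC i)).trans ?_
    rw [hAq, hCp]
    rcases min_choice p (1 - p) with h | h <;> rw [h]
    · exact (min_le_left _ _).trans (by linarith)
    · exact (min_le_right _ _).trans (by linarith)
  have hexponent :
      -(Fintype.card ι * (p - q) ^ 2) / (2 * (2 * min p (1 - p) + (p - q) + (p - q) / 3)) ≤
        -(Fintype.card ι / 6) * (p - q) ^ 2 / (min p (1 - p) + (p - q)) := by
    rcases (sub_nonneg.2 hqp).eq_or_lt with hΔ | hΔ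
    · simp [← hΔ]
    rw [neg_div, neg_mul, neg_div, neg_le_neg_iff, div_le_div_iff₀ (by positivity) (by positivity)]
    nlinarith [mul_nonneg (mul_nonneg (Nat.cast_nonneg (Fintype.card ι) : (0 : ℝ) ≤ _)
      (sq_nonneg (p - q))) (add_nonneg hm hΔ.le)]
  exact (measureReal_sum_nonneg_le_bernstein hindep
    (fun i ↦ (measurable_one.indicator (hA i)).sub (measurable_one.indicator (hC i)))
    (fun i ↦ indicator_one_sub_indicator_one_mem) (sub_nonneg.2 hqp) (by linarith) hmean
    hvar).trans (exp_le_exp.2 hexponent)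

theorem voting_bernstein_bound_general
    {Ω Θ : Type*} [MeasurableSpace Ω]
    (μ : Measure Ω) [IsProbabilityMeasure μ]
    (B : ℕ)
    (phat : Θ → ℝ)
    (θmax : Θ) (hθmax : ∀ θ, phat θ ≤ phat θmax)
    -- the i.i.d. indicator vectors
    (I : Fin B → Ω → Θ → Bool)
    (hIm : ∀ b, Measurable (I b))
    (hiid : iIndepFun I μ)
    (hmarg : ∀ b θ, (μ {ω | I b ω θ = true}).toReal = phat θ)
    (θ : Θ) :
    (μ {ω | (B : ℝ)⁻¹ * ∑ b : Fin B, (if I b ω θ then (1 : ℝ) else 0) ≥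
        (B : ℝ)⁻¹ * ∑ b : Fin B, (if I b ω θmax then (1 : ℝ) else 0)}).toReal ≤
      Real.exp (-((B : ℝ) / 6) * (phat θmax - phat θ) ^ 2 /
        (min (phat θmax) (1 - phat θmax) + (phat θmax - phat θ))) := by
  rcases B.eq_zero_or_pos with rfl | hB
  · simp
  have : Nonempty (Fin B) := ⟨⟨0, hB⟩⟩
  let S : Θ → Set (Θ → Bool) := fun θ' ↦ {v | v θ' = true}
  have hS : ∀ θ', MeasurableSet (S θ') := fun θ' ↦
    (measurable_pi_apply θ' : Measurable fun v : Θ → Bool ↦ v θ') (measurableSet_singleton true)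
  let A : Fin B → Θ → Set Ω := fun b θ' ↦ {ω | I b ω θ' = true}
  have hA : ∀ b θ', MeasurableSet (A b θ') := fun b θ' ↦ hIm b (hS θ')
  have hevent : {ω | (B : ℝ)⁻¹ * ∑ b : Fin B, (if I b ω θ then (1 : ℝ) else 0) ≥
      (B : ℝ)⁻¹ * ∑ b : Fin B, (if I b ω θmax then (1 : ℝ) else 0)} =
      {ω | 0 ≤ ∑ b, ((A b θ).indicator (1 : Ω → ℝ) ω - (A b θmax).indicator 1 ω)} := by
    ext ω
    simp [A, Set.indicator_apply, Finset.sum_sub_distrib, sub_nonneg,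
      mul_le_mul_iff_right₀ (inv_pos.2 (Nat.cast_pos.2 hB) : (0 : ℝ) < _)]
  have hindep : iIndepFun
      (fun b ω ↦ (A b θ).indicator (1 : Ω → ℝ) ω - (A b θmax).indicator 1 ω) μ :=
    hiid.comp (fun _ v ↦ (S θ).indicator 1 v - (S θmax).indicator 1 v) fun _ ↦
      (measurable_one.indicator (hS θ)).sub (measurable_one.indicator (hS θmax))
  have hbound := measureReal_sum_indicator_sub_indicator_nonneg_le (hA · θ) (hA · θmax) hindep
    (hmarg · θ) (hmarg · θmax) (hθmax θ)
  rwa [Fintype.card_fin, ← hevent] at hbound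

/-- **Bernstein bound for the Monte Carlo voting error (from the proof of Lemma 6).**
Given `p̂ : Θ → [0,1]` maximized at `θ_max` and i.i.d. random indicator vectors
`I^1,…,I^B ∈ {0,1}^Θ` with marginals `E[I_θ^b] = p̂(θ)` (no independence across `θ`
within one `b` is assumed), the empirical frequencies `p̄(θ) = (1/B)Σ_b I_θ^b` satisfy,
for every `θ`:
`P(p̄(θ) ≥ p̄(θ_max)) ≤ exp(−(B/6)·(p̂_max − p̂(θ))²/(min{p̂_max, 1−p̂_max} + p̂_max − p̂(θ)))`. -/
theorem voting_bernstein_bound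
    {Ω Θ : Type*} [MeasurableSpace Ω] [Fintype Θ] [Nonempty Θ]
    (μ : Measure Ω) [IsProbabilityMeasure μ]
    (B : ℕ) (hB : 0 < B)
    (phat : Θ → ℝ) (hphat01 : ∀ θ, phat θ ∈ Set.Icc (0 : ℝ) 1)
    (θmax : Θ) (hθmax : ∀ θ, phat θ ≤ phat θmax)
    -- the i.i.d. indicator vectors
    (I : Fin B → Ω → Θ → Bool)
    (hIm : ∀ b, Measurable (I b))
    (hiid : iIndepFun I μ)
    (hident : ∀ b b', Measure.map (I b) μ = Measure.map (I b') μ)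
    (hmarg : ∀ b θ, (μ {ω | I b ω θ = true}).toReal = phat θ)
    (θ : Θ) :
    (μ {ω | (B : ℝ)⁻¹ * ∑ b : Fin B, (if I b ω θ then (1 : ℝ) else 0) ≥
        (B : ℝ)⁻¹ * ∑ b : Fin B, (if I b ω θmax then (1 : ℝ) else 0)}).toReal ≤
      Real.exp (-((B : ℝ) / 6) * (phat θmax - phat θ) ^ 2 /
        (min (phat θmax) (1 - phat θmax) + (phat θmax - phat θ))) :=
  voting_bernstein_bound_general μ B phat θmax hθmax I hIm hiid hmarg θ
end
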